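/- arXiv:2312.12890 — 7 statements merged into one kernel-verified Lean document; each statement's English description precedes it below -/
import Mathlib

section
/- Let n ≥ 1, I ⊂ ℝ a closed interval, x₁,…,xₙ ∈ I, and f ∈ C^{n-1}(I). For every 1 ≤ i ≤ n there exists ξ ∈ I such that f^{(i-1)}(ξ)/(i-1)! = Σ_{ℓ≤i} f(x_ℓ) · ∏_{m≤i, m≠ℓ} 1/(x_ℓ - x_m), provided the points x₁,…,x_i are pairwise distinct. -/
/-!
The divided difference on the right is the leading coefficient of the Lagrange interpolation
polynomial `P` of `f` at the `i` nodes. Since `f - P` vanishes at `i` distinct points of `[a, b]`,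
repeated application of Rolle's theorem produces `ξ` with `(f - P)^{(i-1)}(ξ) = 0`, and
`P^{(i-1)}` is the constant `(i-1)!` times that leading coefficient.
-/

open Set Finset Polynomial
open scoped Nat

theorem Polynomial.iterate_derivative_of_natDegree_le {R : Type*} [Semiring R] {p : R[X]} {k : ℕ}
    (hp : p.natDegree ≤ k) : derivative^[k] p = C ((k ! : R) * p.coeff k) := by
  ext m
  rw [coeff_iterate_derivative, coeff_C]
  rcases m with _ | m
  · simp [Nat.descFactorial_self, nsmul_eq_mul]
  · simp [coeff_eq_zero_of_natDegree_lt (show p.natDegree < m + 1 + k by omega)]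

theorem Polynomial.iteratedDeriv_eval {𝕜 : Type*} [NontriviallyNormedField 𝕜] (p : 𝕜[X])
    (k : ℕ) :
    iteratedDeriv k (fun t => p.eval t) = fun t => (derivative^[k] p).eval t := by
  induction k generalizing p with
  | zero => simp
  | succ k ih =>
    have hderiv : deriv (fun t => p.eval t) = fun t => p.derivative.eval t := by
      ext
      exact p.deriv
    rw [iteratedDeriv_succ', hderiv, ih, Function.iterate_succ_apply]

theorem Polynomial.contDiff_eval {𝕜 : Type*} [NontriviallyNormedField 𝕜] (p : 𝕜[X])
    (n : WithTop ℕ∞) : ContDiff 𝕜 n fun t => p.eval t := by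
  simpa [coe_aeval_eq_eval] using p.contDiff_aeval (R := 𝕜) (𝕜 := 𝕜) n

theorem Polynomial.iteratedDerivWithin_eval {𝕜 : Type*} [NontriviallyNormedField 𝕜]
    {s : Set 𝕜} {x : 𝕜} (hs : UniqueDiffOn 𝕜 s) (hx : x ∈ s) (p : 𝕜[X]) (k : ℕ) :
    iteratedDerivWithin k (fun t => p.eval t) s x = (derivative^[k] p).eval x := by
  rw [iteratedDerivWithin_eq_iteratedDeriv hs (p.contDiff_eval k).contDiffAt hx,
    p.iteratedDeriv_eval]

theorem Lagrange.coeff_interpolate {F ι : Type*} [Field F] [DecidableEq ι] {s : Finset ι}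
    {v : ι → F} (hvs : Set.InjOn v s) (r : ι → F) :
    (interpolate s v r).coeff (#s - 1) =
      ∑ i ∈ s, r i * ∏ j ∈ s.erase i, (v i - v j)⁻¹ := by
  rw [coeff_eq_sum hvs (degree_interpolate_lt r hvs)]
  refine sum_congr rfl fun i hi => ?_
  rw [eval_interpolate_at_node r hvs hi, div_eq_mul_inv, prod_inv_distrib]

theorem exists_iteratedDerivWithin_eq_zero {a b : ℝ} {k : ℕ} {G : ℝ → ℝ}
    (hG : ContDiffOn ℝ k G (Icc a b)) {u : Fin (k + 1) → ℝ} (hu : StrictMono u)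
    (hu_mem : ∀ j, u j ∈ Icc a b) (hGu : ∀ j, G (u j) = 0) :
    ∃ ξ ∈ Icc a b, iteratedDerivWithin k G (Icc a b) ξ = 0 := by
  induction k generalizing G with
  | zero => exact ⟨u 0, hu_mem 0, by simpa using hGu 0⟩
  | succ k ih =>
    have hab : a < b := (hu_mem 0).1.trans_lt ((hu Fin.zero_lt_one).trans_le (hu_mem 1).2)
    have hrolle (j : Fin (k + 1)) : ∃ v ∈ Ioo (u j.castSucc) (u j.succ), deriv G v = 0 :=
      exists_deriv_eq_zero (hu j.castSucc_lt_succ)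
        (hG.continuousOn.mono (Icc_subset_Icc (hu_mem _).1 (hu_mem _).2))
        ((hGu _).trans (hGu _).symm)
    choose v hv hv_zero using hrolle
    have hv_mem (j) : v j ∈ Ioo a b :=
      ⟨(hu_mem _).1.trans_lt (hv j).1, (hv j).2.trans_le (hu_mem _).2⟩
    have hv_mono : StrictMono v := Fin.strictMono_iff_lt_succ.2 fun j =>
      (hv _).2.trans (by rw [Fin.succ_castSucc]; exact (hv j.succ).1)
    have hG' : ContDiffOn ℝ k (derivWithin G (Icc a b)) (Icc a b) :=
      hG.derivWithin (uniqueDiffOn_Icc hab) (by norm_cast)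
    have hG'v (j) : derivWithin G (Icc a b) (v j) = 0 := by
      rw [derivWithin_of_mem_nhds (Icc_mem_nhds (hv_mem j).1 (hv_mem j).2), hv_zero]
    obtain ⟨ξ, hξ, hξ_zero⟩ := ih hG' hv_mono (fun j => Ioo_subset_Icc_self (hv_mem j)) hG'v
    exact ⟨ξ, hξ, by rwa [iteratedDerivWithin_succ']⟩

theorem exists_iteratedDerivWithin_eq_of_eq_eval {a b : ℝ} (hab : a < b) {N : ℕ}
    {f : ℝ → ℝ} (hf : ContDiffOn ℝ N f (Icc a b)) (p : ℝ[X]) {s : Finset ℝ}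
    (hs : #s = N + 1) (hs_sub : ↑s ⊆ Icc a b) (hfp : ∀ y ∈ s, f y = p.eval y) :
    ∃ ξ ∈ Icc a b, iteratedDerivWithin N f (Icc a b) ξ = (derivative^[N] p).eval ξ := by
  have hp : ContDiffOn ℝ N (fun t => p.eval t) (Icc a b) := (p.contDiff_eval N).contDiffOn
  have hu_mem := s.orderEmbOfFin_mem hs
  obtain ⟨ξ, hξ, hξ_zero⟩ := exists_iteratedDerivWithin_eq_zero
    (G := f - fun t => p.eval t) (hf.sub hp)
    (s.orderEmbOfFin hs).strictMono (fun j => hs_sub (hu_mem j))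
    (fun j => sub_eq_zero.2 (hfp _ (hu_mem j)))
  refine ⟨ξ, hξ, ?_⟩
  have hu := uniqueDiffOn_Icc hab
  rwa [iteratedDerivWithin_sub hξ hu (hf ξ hξ) (hp ξ hξ), sub_eq_zero,
    Polynomial.iteratedDerivWithin_eval hu hξ] at hξ_zero

theorem stmt_0_general (n : ℕ) (a b : ℝ) (hab : a < b)
    (x : ℕ → ℝ) (hx : ∀ l < n, x l ∈ Icc a b)
    (f : ℝ → ℝ) (hf : ContDiffOn ℝ (n - 1 : ℕ) f (Icc a b))
    (i : ℕ) (hi1 : 1 ≤ i) (hin : i ≤ n)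
    (hdist : ∀ l < i, ∀ m < i, l ≠ m → x l ≠ x m) :
    ∃ ξ ∈ Icc a b,
      iteratedDerivWithin (i - 1) f (Icc a b) ξ / (Nat.factorial (i - 1) : ℝ) =
        ∑ l ∈ Finset.range i, f (x l) * ∏ m ∈ (Finset.range i).erase l, (x l - x m)⁻¹ := by
  obtain ⟨N, rfl⟩ := Nat.exists_eq_add_of_le' hi1
  have hinj : InjOn x (Finset.range (N + 1)) := fun l hl m hm hxlm =>
    by_contra fun hlm => hdist l (Finset.mem_range.1 hl) m (Finset.mem_range.1 hm) hlm hxlm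
  set P := Lagrange.interpolate (Finset.range (N + 1)) x fun l => f (x l)
  have hP_deg : P.natDegree ≤ N := by
    have := Lagrange.degree_interpolate_le (fun l => f (x l)) hinj
    rw [card_range, Nat.add_sub_cancel] at this
    exact natDegree_le_of_degree_le this
  obtain ⟨ξ, hξ, hξ_eq⟩ := exists_iteratedDerivWithin_eq_of_eq_eval (N := N) hab
    (hf.of_le (by norm_cast; omega)) P (s := (Finset.range (N + 1)).image x)
    (by rw [card_image_of_injOn hinj, card_range])
    (by
      simp only [coe_image, coe_range, Set.image_subset_iff]
      exact fun l hl => hx l (lt_of_lt_of_le hl hin))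
    (by
      simp only [Finset.mem_image, Finset.mem_range]
      rintro _ ⟨l, hl, rfl⟩
      exact (Lagrange.eval_interpolate_at_node (fun l => f (x l)) hinj
        (Finset.mem_range.2 hl)).symm)
  refine ⟨ξ, hξ, ?_⟩
  rw [Nat.add_sub_cancel, hξ_eq, iterate_derivative_of_natDegree_le hP_deg, eval_C,
    mul_div_cancel_left₀ _ (by positivity), ← Lagrange.coeff_interpolate hinj, card_range,
    Nat.add_sub_cancel]

/-- Lagrange interpolation / repeated Rolle: the (i-1)-th divided difference of `f`
at `x 0, …, x (i-1)` equals `f^{(i-1)}(ξ)/(i-1)!` for some `ξ` in the closed interval. -/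
theorem stmt_0 (n : ℕ) (hn : 1 ≤ n) (a b : ℝ) (hab : a < b)
    (x : ℕ → ℝ) (hx : ∀ l < n, x l ∈ Icc a b)
    (f : ℝ → ℝ) (hf : ContDiffOn ℝ (n - 1 : ℕ) f (Icc a b))
    (i : ℕ) (hi1 : 1 ≤ i) (hin : i ≤ n)
    (hdist : ∀ l < i, ∀ m < i, l ≠ m → x l ≠ x m) :
    ∃ ξ ∈ Icc a b,
      iteratedDerivWithin (i - 1) f (Icc a b) ξ / (Nat.factorial (i - 1) : ℝ) =
        ∑ l ∈ Finset.range i, f (x l) * ∏ m ∈ (Finset.range i).erase l, (x l - x m)⁻¹ :=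
  stmt_0_general n a b hab x hx f hf i hi1 hin hdist
end

section
/- Let n ≥ 1, I ⊂ ℝ a closed interval with pairwise distinct points x₁,…,xₙ ∈ I. Suppose f₁,…,fₙ ∈ C^{n-1}(I) and A_{ij} ≥ 0 satisfy |f_j^{(i-1)}(x)/(i-1)!| ≤ A_{ij} for all 1 ≤ i,j ≤ n and x ∈ I. Then |det(f_j(x_i))_{i,j}| ≤ (∏_{i>j} |x_i - x_j|) · Σ_{σ ∈ S_n} ∏_{i=1}^n A_{i,σ(i)}. -/
/-!
Expand each `f_j` at the nodes in the Newton basis `ω_l = ∏_{m<l} (X - x_m)`: this factors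
`(f_j(x_i))` as `N * D` with `N_{il} = ω_l(x_i)` lower triangular, so
`det N = ∏_{i>j} (x_i - x_j)`. The entry `D_{kj}` is the leading coefficient of the Newton
interpolant of `f_j` at `x_0, …, x_k`; the difference of `f_j` and that interpolant has `k + 1`
zeros in `I`, so by iterated Rolle `D_{kj} = f_j^{(k)}(ξ) / k!` for some `ξ ∈ I`. Hence
`|D_{kj}| ≤ A_{kj}`, and the permutation expansion of `det D` gives the bound.
-/

open Set Finset Polynomial

namespace Polynomial

theorem iterate_derivative_eq_C_of_natDegree_le {R : Type*} [Semiring R] {p : R[X]} {k : ℕ}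
    (hp : p.natDegree ≤ k) : derivative^[k] p = C (k.factorial * p.coeff k) := by
  have hdeg : (derivative^[k] p).natDegree = 0 := by
    have := natDegree_iterate_derivative p k
    omega
  rw [eq_C_of_natDegree_eq_zero hdeg, coeff_iterate_derivative, zero_add,
    Nat.descFactorial_self, nsmul_eq_mul]

theorem iteratedDerivWithin_eval_s1 {𝕜 : Type*} [NontriviallyNormedField 𝕜] {s : Set 𝕜}
    (hs : UniqueDiffOn 𝕜 s) (p : 𝕜[X]) (k : ℕ) {y : 𝕜} (hy : y ∈ s) :
    iteratedDerivWithin k (fun t => p.eval t) s y = (derivative^[k] p).eval y := by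
  induction k generalizing y with
  | zero => simp
  | succ k ih =>
    rw [iteratedDerivWithin_succ, derivWithin_congr (fun z hz => ih hz) (ih hy),
      Function.iterate_succ_apply']
    exact Polynomial.derivWithin _ (hs y hy)

end Polynomial

theorem exists_iteratedDerivWithin_eq_zero_of_strictMono {a b : ℝ} (hab : a < b) {k : ℕ}
    {g : ℝ → ℝ} (hg : ContDiffOn ℝ k g (Icc a b)) {z : Fin (k + 1) → ℝ} (hz : StrictMono z)
    (hzI : ∀ i, z i ∈ Icc a b) (hgz : ∀ i, g (z i) = 0) :
    ∃ ξ ∈ Icc a b, iteratedDerivWithin k g (Icc a b) ξ = 0 := by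
  induction k generalizing g with
  | zero => exact ⟨z 0, hzI 0, by simpa using hgz 0⟩
  | succ k ih =>
    have hRolle : ∀ i : Fin (k + 1), ∃ c ∈ Ioo (z i.castSucc) (z i.succ),
        derivWithin g (Icc a b) c = 0 := by
      intro i
      have hsub : Icc (z i.castSucc) (z i.succ) ⊆ Icc a b :=
        Icc_subset_Icc (hzI _).1 (hzI _).2
      obtain ⟨c, hc, hc0⟩ := exists_deriv_eq_zero (hz Fin.castSucc_lt_succ)
        (hg.continuousOn.mono hsub) ((hgz _).trans (hgz _).symm)
      refine ⟨c, hc, ?_⟩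
      rwa [derivWithin_of_mem_nhds
        (Icc_mem_nhds ((hzI _).1.trans_lt hc.1) (hc.2.trans_le (hzI _).2))]
    choose w hw hw0 using hRolle
    have hwI : ∀ i, w i ∈ Icc a b := fun i =>
      ⟨((hzI _).1.trans_lt (hw i).1).le, ((hw i).2.trans_le (hzI _).2).le⟩
    have hwmono : StrictMono w := Fin.strictMono_iff_lt_succ.2 fun i =>
      (hw i.castSucc).2.trans_le (by rw [Fin.succ_castSucc]; exact (hw i.succ).1.le)
    obtain ⟨ξ, hξ, hξ0⟩ :=
      ih (hg.derivWithin (uniqueDiffOn_Icc hab) (by norm_cast)) hwmono hwI hw0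
    exact ⟨ξ, hξ, by rwa [iteratedDerivWithin_succ']⟩

theorem exists_iteratedDerivWithin_eq_factorial_mul_coeff {a b : ℝ} (hab : a < b) {k : ℕ}
    {g : ℝ → ℝ} (hg : ContDiffOn ℝ k g (Icc a b)) {P : ℝ[X]} (hP : P.natDegree ≤ k)
    {s : Finset ℝ} (hs : #s = k + 1) (hsI : (s : Set ℝ) ⊆ Icc a b)
    (hgP : ∀ y ∈ s, g y = P.eval y) :
    ∃ ξ ∈ Icc a b, iteratedDerivWithin k g (Icc a b) ξ = k.factorial * P.coeff k := by
  have hPsmooth : ContDiffOn ℝ k (fun t => P.eval t) (Icc a b) :=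
    (by simpa using P.contDiff_aeval (𝕜 := ℝ) k : ContDiff ℝ k _).contDiffOn
  have hmem := s.orderEmbOfFin_mem hs
  obtain ⟨ξ, hξ, hξ0⟩ := exists_iteratedDerivWithin_eq_zero_of_strictMono
    (g := g - fun t => P.eval t) hab (hg.sub hPsmooth) (s.orderEmbOfFin hs).strictMono
    (fun i => hsI (hmem i)) (fun i => sub_eq_zero.2 (hgP _ (hmem i)))
  refine ⟨ξ, hξ, ?_⟩
  rwa [iteratedDerivWithin_sub hξ (uniqueDiffOn_Icc hab) (hg ξ hξ) (hPsmooth ξ hξ),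
    P.iteratedDerivWithin_eval_s1 (uniqueDiffOn_Icc hab) k hξ,
    iterate_derivative_eq_C_of_natDegree_le hP, eval_C, sub_eq_zero] at hξ0

noncomputable section Newton

open Matrix

variable {R : Type*} [CommRing R] {n : ℕ} (x : Fin n → R)

def newtonBasis (l : Fin n) : R[X] := ∏ m ∈ Iio l, (X - C (x m))

theorem monic_newtonBasis (l : Fin n) : (newtonBasis x l).Monic :=
  monic_prod_of_monic _ _ fun m _ => monic_X_sub_C (x m)

theorem natDegree_newtonBasis [Nontrivial R] (l : Fin n) : (newtonBasis x l).natDegree = l := by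
  rw [newtonBasis, natDegree_prod_of_monic _ _ fun m _ => monic_X_sub_C (x m)]
  simp

theorem eval_newtonBasis_of_lt {i l : Fin n} (h : i < l) : (newtonBasis x l).eval (x i) = 0 := by
  rw [newtonBasis, eval_prod]
  exact prod_eq_zero (mem_Iio.2 h) (by simp)

def newtonMatrix : Matrix (Fin n) (Fin n) R := Matrix.of fun i l => (newtonBasis x l).eval (x i)

theorem newtonMatrix_isLowerTriangular : (newtonMatrix x).IsLowerTriangular :=
  fun _ _ h => eval_newtonBasis_of_lt x h

theorem det_newtonMatrix : (newtonMatrix x).det = ∏ i, ∏ j ∈ Iio i, (x i - x j) := by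
  rw [det_of_isLowerTriangular _ (newtonMatrix_isLowerTriangular x)]
  simp [newtonMatrix, newtonBasis, eval_prod]

def newtonInterpolant (c : Fin n → R) (k : Fin n) : R[X] :=
  ∑ l ∈ Iic k, C (c l) * newtonBasis x l

variable (c : Fin n → R)

theorem eval_newtonInterpolant {i k : Fin n} (hik : i ≤ k) :
    (newtonInterpolant x c k).eval (x i) = (newtonMatrix x *ᵥ c) i := by
  rw [newtonInterpolant, eval_finsetSum, mulVec, dotProduct]
  refine sum_subset (subset_univ _) (fun l _ hl => ?_) |>.trans (sum_congr rfl fun l _ => ?_)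
  · have hkl : k < l := not_le.1 (by simpa using hl)
    rw [eval_mul, eval_newtonBasis_of_lt x (hik.trans_lt hkl), mul_zero]
  · simp [newtonMatrix, mul_comm]

theorem natDegree_newtonInterpolant_le [Nontrivial R] (k : Fin n) :
    (newtonInterpolant x c k).natDegree ≤ k :=
  natDegree_sum_le_of_forall_le _ _ fun l hl => (natDegree_C_mul_le _ _).trans
    ((natDegree_newtonBasis x l).trans_le (Fin.le_def.1 (Finset.mem_Iic.1 hl)))

theorem coeff_newtonInterpolant [Nontrivial R] (k : Fin n) :
    (newtonInterpolant x c k).coeff k = c k := by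
  rw [newtonInterpolant, finsetSum_coeff, sum_eq_single_of_mem k (Finset.mem_Iic.2 le_rfl),
    coeff_C_mul]
  · rw [← natDegree_newtonBasis x k, (monic_newtonBasis x k).coeff_natDegree, mul_one]
  · intro l hl hlk
    refine coeff_eq_zero_of_natDegree_lt ((natDegree_C_mul_le _ _).trans_lt ?_)
    rw [natDegree_newtonBasis]
    exact Fin.lt_def.1 (lt_of_le_of_ne (Finset.mem_Iic.1 hl) hlk)

end Newton

open Matrix in
theorem exists_iteratedDerivWithin_div_factorial_eq_of_eq_newtonMatrix_mulVec {a b : ℝ}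
    (hab : a < b) {n : ℕ} {x : Fin n → ℝ} (hx : ∀ i, x i ∈ Icc a b)
    (hxinj : Function.Injective x) {g : ℝ → ℝ} {c : Fin n → ℝ}
    (hgc : ∀ i, g (x i) = (newtonMatrix x *ᵥ c) i) (k : Fin n)
    (hg : ContDiffOn ℝ (k : ℕ) g (Icc a b)) :
    ∃ ξ ∈ Icc a b, iteratedDerivWithin k g (Icc a b) ξ / (k : ℕ).factorial = c k := by
  have hcard : #((Finset.Iic k).image x) = k + 1 := by
    rw [card_image_of_injective _ hxinj, Fin.card_Iic]
  obtain ⟨ξ, hξ, hξk⟩ := exists_iteratedDerivWithin_eq_factorial_mul_coeff hab hg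
    (natDegree_newtonInterpolant_le x c k) hcard
    (by rw [coe_image]; exact Set.image_subset_iff.2 fun i _ => hx i)
    (by simpa using fun i hik => (hgc i).trans (eval_newtonInterpolant x c hik).symm)
  refine ⟨ξ, hξ, ?_⟩
  rw [hξk, coeff_newtonInterpolant, mul_div_cancel_left₀ _ (by positivity)]

theorem Matrix.abs_det_le_sum_prod {R n : Type*} [CommRing R] [LinearOrder R]
    [IsStrictOrderedRing R] [Fintype n] [DecidableEq n] {M B : Matrix n n R}
    (hMB : ∀ i j, |M i j| ≤ B i j) :
    |M.det| ≤ ∑ σ : Equiv.Perm n, ∏ i, B i (σ i) := by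
  rw [← det_transpose, det_apply']
  refine (abs_sum_le_sum_abs _ _).trans (sum_le_sum fun σ _ => ?_)
  rw [abs_mul, ← Int.cast_abs, Equiv.Perm.sign_abs, Int.cast_one, one_mul, abs_prod]
  exact prod_le_prod (fun _ _ => abs_nonneg _) fun i _ => hMB i (σ i)

theorem stmt_1_general (n : ℕ) (a b : ℝ) (hab : a < b)
    (x : Fin n → ℝ) (hx : ∀ i, x i ∈ Icc a b) (hxdist : Function.Injective x)
    (f : Fin n → ℝ → ℝ) (hf : ∀ j, ContDiffOn ℝ (n - 1 : ℕ) (f j) (Icc a b))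
    (A : Fin n → Fin n → ℝ)
    (hbound : ∀ i j : Fin n, ∀ y ∈ Icc a b,
      |iteratedDerivWithin (i : ℕ) (f j) (Icc a b) y / (Nat.factorial i : ℝ)| ≤ A i j) :
    |Matrix.det (Matrix.of fun i j : Fin n => f j (x i))| ≤
      (∏ i : Fin n, ∏ j ∈ Finset.univ.filter (fun j : Fin n => j < i), |x i - x j|) *
        ∑ σ : Equiv.Perm (Fin n), ∏ i : Fin n, A i (σ i) := by
  set F := Matrix.of fun i j : Fin n => f j (x i)
  set N := newtonMatrix x
  have hN : IsUnit N.det := by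
    rw [det_newtonMatrix, isUnit_iff_ne_zero, prod_ne_zero_iff]
    exact fun i _ => prod_ne_zero_iff.2 fun j hj => sub_ne_zero.2 (hxdist.ne (mem_Iio.1 hj).ne')
  set D := N⁻¹ * F
  have hNF : N * D = F := Matrix.mul_nonsing_inv_cancel_left _ _ hN
  have hD : ∀ k j, |D k j| ≤ A k j := by
    intro k j
    obtain ⟨ξ, hξ, hξk⟩ := exists_iteratedDerivWithin_div_factorial_eq_of_eq_newtonMatrix_mulVec
      hab hx hxdist (g := f j) (c := fun l => D l j)
      (fun i => (congrFun (congrFun hNF i) j).symm) k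
      ((hf j).of_le (by exact_mod_cast (by omega : (k : ℕ) ≤ n - 1)))
    exact hξk ▸ hbound k j ξ hξ
  rw [← hNF, Matrix.det_mul, abs_mul, det_newtonMatrix, abs_prod]
  simp only [abs_prod, filter_gt_eq_Iio]
  exact mul_le_mul_of_nonneg_left (Matrix.abs_det_le_sum_prod hD) (by positivity)

/-- The key determinant bound of the Bombieri–Pila method. -/
theorem stmt_1 (n : ℕ) (hn : 1 ≤ n) (a b : ℝ) (hab : a < b)
    (x : Fin n → ℝ) (hx : ∀ i, x i ∈ Icc a b) (hxdist : Function.Injective x)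
    (f : Fin n → ℝ → ℝ) (hf : ∀ j, ContDiffOn ℝ (n - 1 : ℕ) (f j) (Icc a b))
    (A : Fin n → Fin n → ℝ) (hA : ∀ i j, 0 ≤ A i j)
    (hbound : ∀ i j : Fin n, ∀ y ∈ Icc a b,
      |iteratedDerivWithin (i : ℕ) (f j) (Icc a b) y / (Nat.factorial i : ℝ)| ≤ A i j) :
    |Matrix.det (Matrix.of fun i j : Fin n => f j (x i))| ≤
      (∏ i : Fin n, ∏ j ∈ Finset.univ.filter (fun j : Fin n => j < i), |x i - x j|) *
        ∑ σ : Equiv.Perm (Fin n), ∏ i : Fin n, A i (σ i) :=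
  stmt_1_general n a b hab x hx hxdist f hf A hbound
end

section
/- Let k ≥ 1, N > 0, I ⊆ [0,N] a closed interval, and f ∈ C^k(I). Suppose X > 0 and δ ≥ 1/N satisfy |f^{(i)}(x)/i!| ≤ X·δ^i for all 0 ≤ i ≤ k and x ∈ I. Then for any nonnegative integers j₁, j₂, the function f_{j₁,j₂}(x) = x^{j₁}·f(x)^{j₂} satisfies |f_{j₁,j₂}^{(i-1)}(x)/(i-1)!| ≤ (2N)^{j₁}·(i·X)^{j₂}·δ^{i-1} for all 1 ≤ i ≤ k and x ∈ I. -/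
open Set Finset

private lemma iterWithin_eq_iter {g : ℝ → ℝ} (hg : ContDiff ℝ (⊤ : ℕ∞) g) {s : Set ℝ}
    (hs : UniqueDiffOn ℝ s) :
    ∀ n : ℕ, ∀ x ∈ s, iteratedDerivWithin n g s x = iteratedDeriv n g x := by
  intro n
  induction n with
  | zero => intro x hx; simp
  | succ n ih =>
    intro x hx
    rw [iteratedDerivWithin_succ, iteratedDeriv_succ,
      derivWithin_congr (fun y hy => ih y hy) (ih x hx)]
    exact ((hg.differentiable_iteratedDeriv n (WithTop.coe_lt_coe.mpr (ENat.coe_lt_top n))) x).derivWithin (hs x hx)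

private lemma iteratedDeriv_pow' (j : ℕ) : ∀ n : ℕ, ∀ x : ℝ,
    iteratedDeriv n (fun t : ℝ => t ^ j) x = (j.descFactorial n : ℝ) * x ^ (j - n) := by
  intro n
  induction n with
  | zero => intro x; simp
  | succ n ih =>
    intro x
    rw [iteratedDeriv_succ]
    have h1 : deriv (iteratedDeriv n fun t : ℝ => t ^ j) x
        = deriv (fun t : ℝ => (j.descFactorial n : ℝ) * t ^ (j - n)) x := by
      apply Filter.EventuallyEq.deriv_eq
      filter_upwards with t using ih t
    rw [h1, deriv_const_mul _ (differentiableAt_pow _), deriv_pow_field,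
      Nat.descFactorial_succ, Nat.cast_mul, ← Nat.sub_sub]
    ring

private lemma coeff_mul_le {s : Set ℝ} (hs : UniqueDiffOn ℝ s) {x : ℝ} (hx : x ∈ s)
    {g h : ℝ → ℝ} {n : ℕ} (hg : ContDiffOn ℝ n g s) (hh : ContDiffOn ℝ n h s) :
    |iteratedDerivWithin n (fun y => g y * h y) s x| / (n.factorial : ℝ) ≤
      ∑ a ∈ Finset.range (n + 1),
        (|iteratedDerivWithin a g s x| / (a.factorial : ℝ)) *
        (|iteratedDerivWithin (n - a) h s x| / (((n - a).factorial : ℕ) : ℝ)) := by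
  have key := norm_iteratedFDerivWithin_mul_le (𝕜 := ℝ) hg hh hs hx
    (le_refl (n : WithTop ℕ∞))
  simp only [norm_iteratedFDerivWithin_eq_norm_iteratedDerivWithin, Real.norm_eq_abs] at key
  rw [div_le_iff₀ (by positivity)]
  refine key.trans (le_of_eq ?_)
  rw [Finset.sum_mul]
  apply Finset.sum_congr rfl
  intro a ha
  rw [Finset.mem_range, Nat.lt_succ_iff] at ha
  have hfac : ((n.choose a : ℕ) : ℝ) * (a.factorial : ℝ) * (((n - a).factorial : ℕ) : ℝ)
      = (n.factorial : ℝ) := by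
    exact_mod_cast Nat.choose_mul_factorial_mul_factorial ha
  have h1 : (a.factorial : ℝ) ≠ 0 := by positivity
  have h2 : (((n - a).factorial : ℕ) : ℝ) ≠ 0 := by positivity
  field_simp
  linear_combination |iteratedDerivWithin a g s x| * |iteratedDerivWithin (n - a) h s x| * hfac
open Set Finset

private lemma sum_choose_le (j m : ℕ) : (∑ a ∈ Finset.range m, (j.choose a : ℝ)) ≤ 2 ^ j := by
  have h : (∑ a ∈ Finset.range m, j.choose a) ≤ 2 ^ j := by
    calc ∑ a ∈ Finset.range m, j.choose a
        ≤ ∑ a ∈ Finset.range (max m (j + 1)), j.choose a :=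
          Finset.sum_le_sum_of_subset (Finset.range_subset_range.mpr (le_max_left _ _))
      _ = ∑ a ∈ Finset.range (j + 1), j.choose a := by
          refine (Finset.sum_subset (Finset.range_subset_range.mpr (le_max_right _ _)) ?_).symm
          intro x _ hx
          rw [Finset.mem_range, not_lt] at hx
          exact Nat.choose_eq_zero_of_lt hx
      _ = 2 ^ j := Nat.sum_range_choose j
  exact_mod_cast h

private lemma coeff_pow_le {s : Set ℝ} (hs : UniqueDiffOn ℝ s) {f : ℝ → ℝ} {k : ℕ}
    (hf : ContDiffOn ℝ (k : ℕ) f s) {X δ : ℝ} (hX : 0 < X) (hδ : 0 < δ)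
    (hbound : ∀ i ≤ k, ∀ x ∈ s,
      |iteratedDerivWithin i f s x| / (i.factorial : ℝ) ≤ X * δ ^ i) :
    ∀ j : ℕ, ∀ n ≤ k, ∀ x ∈ s,
      |iteratedDerivWithin n (fun t => f t ^ j) s x| / (n.factorial : ℝ) ≤
        ((n : ℝ) + 1) ^ j * X ^ j * δ ^ n := by
  intro j
  induction j with
  | zero =>
    intro n hn x hx
    simp only [pow_zero, one_mul]
    match n with
    | 0 => simp
    | (m + 1) =>
      have h0 : |iteratedDerivWithin (m + 1) (fun _ : ℝ => (1 : ℝ)) s x| = 0 := by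
        rw [← Real.norm_eq_abs, ← norm_iteratedFDerivWithin_eq_norm_iteratedDerivWithin,
          iteratedFDerivWithin_succ_const m (1 : ℝ)]
        simp
      rw [h0, zero_div]
      positivity
  | succ j ih =>
    intro n hn x hx
    have heq : (fun t => f t ^ (j + 1)) = fun t => f t * f t ^ j := by
      funext t; ring
    rw [heq]
    have hfn : ContDiffOn ℝ (n : ℕ) f s := hf.of_le (by exact_mod_cast hn)
    refine (coeff_mul_le hs hx hfn (hfn.pow j)).trans ?_
    have hterm : ∀ a ∈ Finset.range (n + 1),
        (|iteratedDerivWithin a f s x| / (a.factorial : ℝ)) *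
          (|iteratedDerivWithin (n - a) (fun t => f t ^ j) s x| / (((n - a).factorial : ℕ) : ℝ))
        ≤ (X * δ ^ a) * (((n : ℝ) + 1) ^ j * X ^ j * δ ^ (n - a)) := by
      intro a ha
      rw [Finset.mem_range, Nat.lt_succ_iff] at ha
      have h1 := hbound a (ha.trans hn) x hx
      have h2 := ih (n - a) ((Nat.sub_le n a).trans hn) x hx
      have h3 : ((((n - a) : ℕ) : ℝ) + 1) ^ j * X ^ j * δ ^ (n - a) ≤
          ((n : ℝ) + 1) ^ j * X ^ j * δ ^ (n - a) := by
        have : (((n - a) : ℕ) : ℝ) + 1 ≤ (n : ℝ) + 1 := by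
          have := Nat.sub_le n a
          exact_mod_cast Nat.succ_le_succ this
        gcongr
      exact mul_le_mul h1 (h2.trans h3) (by positivity) (by positivity)
    refine (Finset.sum_le_sum hterm).trans ?_
    have hconst : ∀ a ∈ Finset.range (n + 1),
        (X * δ ^ a) * (((n : ℝ) + 1) ^ j * X ^ j * δ ^ (n - a)) =
        ((n : ℝ) + 1) ^ j * X ^ (j + 1) * δ ^ n := by
      intro a ha
      rw [Finset.mem_range, Nat.lt_succ_iff] at ha
      have : δ ^ a * δ ^ (n - a) = δ ^ n := by
        rw [← pow_add, Nat.add_sub_cancel' ha]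
      calc (X * δ ^ a) * (((n : ℝ) + 1) ^ j * X ^ j * δ ^ (n - a))
          = ((n : ℝ) + 1) ^ j * (X * X ^ j) * (δ ^ a * δ ^ (n - a)) := by ring
        _ = ((n : ℝ) + 1) ^ j * X ^ (j + 1) * δ ^ n := by rw [this, ← pow_succ']
    rw [Finset.sum_congr rfl hconst, Finset.sum_const, Finset.card_range, nsmul_eq_mul]
    refine le_of_eq ?_
    push_cast
    ring

/-- Derivative bounds for the monomial composite `x ^ j₁ * f x ^ j₂`. -/
theorem stmt_2 (k : ℕ) (hk : 1 ≤ k) (N : ℝ) (hN : 0 < N)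
    (a b : ℝ) (hab : a < b) (ha : 0 ≤ a) (hb : b ≤ N)
    (f : ℝ → ℝ) (hf : ContDiffOn ℝ (k : ℕ) f (Icc a b))
    (X δ : ℝ) (hX : 0 < X) (hδ : 1 / N ≤ δ)
    (hbound : ∀ i ≤ k, ∀ x ∈ Icc a b,
      |iteratedDerivWithin i f (Icc a b) x / (Nat.factorial i : ℝ)| ≤ X * δ ^ i) :
    ∀ j₁ j₂ : ℕ, ∀ i : ℕ, 1 ≤ i → i ≤ k → ∀ x ∈ Icc a b,
      |iteratedDerivWithin (i - 1) (fun t => t ^ j₁ * f t ^ j₂) (Icc a b) x /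
          (Nat.factorial (i - 1) : ℝ)| ≤
        (2 * N) ^ j₁ * ((i : ℝ) * X) ^ j₂ * δ ^ (i - 1) := by
  intro j₁ j₂ i hi1 hik x hx
  have hu : UniqueDiffOn ℝ (Icc a b) := uniqueDiffOn_Icc hab
  obtain ⟨n, rfl⟩ : ∃ n, i = n + 1 := ⟨i - 1, (Nat.succ_pred_eq_of_pos hi1).symm⟩
  simp only [Nat.add_sub_cancel]
  have hδ0 : 0 < δ := lt_of_lt_of_le (by positivity) hδ
  have hNδ : 1 ≤ N * δ := by
    have : N * (1 / N) ≤ N * δ := by gcongr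
    rwa [mul_one_div, div_self hN.ne'] at this
  have hbound' : ∀ m ≤ k, ∀ y ∈ Icc a b,
      |iteratedDerivWithin m f (Icc a b) y| / (m.factorial : ℝ) ≤ X * δ ^ m := by
    intro m hm y hy
    have := hbound m hm y hy
    rwa [abs_div, Nat.abs_cast] at this
  have hnk : n ≤ k := by omega
  rw [abs_div, Nat.abs_cast]
  have hgc : ContDiff ℝ (⊤ : ℕ∞) (fun t : ℝ => t ^ j₁) := contDiff_id.pow j₁
  have hpow : ContDiffOn ℝ (n : ℕ) (fun t : ℝ => t ^ j₁) (Icc a b) :=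
    (hgc.of_le (by exact_mod_cast le_top)).contDiffOn
  have hfj : ContDiffOn ℝ (n : ℕ) (fun t => f t ^ j₂) (Icc a b) :=
    (hf.pow j₂).of_le (by exact_mod_cast hnk)
  refine (coeff_mul_le hu hx hpow hfj).trans ?_
  have hxN : |x| ≤ N := by
    rw [abs_of_nonneg (le_trans ha hx.1)]
    exact le_trans hx.2 hb
  have hterm : ∀ c ∈ Finset.range (n + 1),
      (|iteratedDerivWithin c (fun t : ℝ => t ^ j₁) (Icc a b) x| / (c.factorial : ℝ)) *
        (|iteratedDerivWithin (n - c) (fun t => f t ^ j₂) (Icc a b) x| /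
          (((n - c).factorial : ℕ) : ℝ))
      ≤ (j₁.choose c : ℝ) * (N ^ j₁ * (((n : ℝ) + 1) ^ j₂ * X ^ j₂ * δ ^ n)) := by
    intro c hc
    rw [Finset.mem_range, Nat.lt_succ_iff] at hc
    have hdesc : (j₁.descFactorial c : ℝ) = (c.factorial : ℝ) * (j₁.choose c : ℝ) := by
      exact_mod_cast Nat.descFactorial_eq_factorial_mul_choose j₁ c
    have hpoweq : |iteratedDerivWithin c (fun t : ℝ => t ^ j₁) (Icc a b) x| / (c.factorial : ℝ)
        = (j₁.choose c : ℝ) * |x| ^ (j₁ - c) := by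
      rw [iterWithin_eq_iter hgc hu c x hx, iteratedDeriv_pow', abs_mul, Nat.abs_cast,
        abs_pow, hdesc]
      field_simp
    rw [hpoweq]
    by_cases hcj : c ≤ j₁
    · have h2 := coeff_pow_le hu hf hX hδ0 hbound' j₂ (n - c) ((Nat.sub_le n c).trans hnk) x hx
      have h2' : |iteratedDerivWithin (n - c) (fun t => f t ^ j₂) (Icc a b) x| /
          (((n - c).factorial : ℕ) : ℝ) ≤ ((n : ℝ) + 1) ^ j₂ * X ^ j₂ * δ ^ (n - c) := by
        refine h2.trans ?_
        have hle : (((n - c) : ℕ) : ℝ) + 1 ≤ (n : ℝ) + 1 := by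
          have := Nat.sub_le n c
          exact_mod_cast Nat.succ_le_succ this
        gcongr
      have h3 : |x| ^ (j₁ - c) ≤ N ^ (j₁ - c) := pow_le_pow_left₀ (abs_nonneg x) hxN _
      have key : N ^ (j₁ - c) * δ ^ (n - c) ≤ N ^ j₁ * δ ^ n := by
        have e1 : N ^ j₁ = N ^ (j₁ - c) * N ^ c := by rw [← pow_add, Nat.sub_add_cancel hcj]
        have e2 : δ ^ n = δ ^ (n - c) * δ ^ c := by rw [← pow_add, Nat.sub_add_cancel hc]
        have hone : (1 : ℝ) ≤ (N * δ) ^ c := one_le_pow₀ hNδ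
        calc N ^ (j₁ - c) * δ ^ (n - c) = (N ^ (j₁ - c) * δ ^ (n - c)) * 1 := by ring
          _ ≤ (N ^ (j₁ - c) * δ ^ (n - c)) * (N * δ) ^ c := by
              refine mul_le_mul_of_nonneg_left hone (by positivity)
          _ = N ^ j₁ * δ ^ n := by rw [e1, e2, mul_pow]; ring
      calc (j₁.choose c : ℝ) * |x| ^ (j₁ - c) *
            (|iteratedDerivWithin (n - c) (fun t => f t ^ j₂) (Icc a b) x| /
              (((n - c).factorial : ℕ) : ℝ))
          ≤ (j₁.choose c : ℝ) * N ^ (j₁ - c) * (((n : ℝ) + 1) ^ j₂ * X ^ j₂ * δ ^ (n - c)) := by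
            refine mul_le_mul (by gcongr) h2' (by positivity) (by positivity)
        _ = (j₁.choose c : ℝ) * (((n : ℝ) + 1) ^ j₂ * X ^ j₂) * (N ^ (j₁ - c) * δ ^ (n - c)) := by
            ring
        _ ≤ (j₁.choose c : ℝ) * (((n : ℝ) + 1) ^ j₂ * X ^ j₂) * (N ^ j₁ * δ ^ n) := by
            refine mul_le_mul_of_nonneg_left key (by positivity)
        _ = (j₁.choose c : ℝ) * (N ^ j₁ * (((n : ℝ) + 1) ^ j₂ * X ^ j₂ * δ ^ n)) := by ring
    · push_neg at hcj
      rw [Nat.choose_eq_zero_of_lt hcj]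
      simp
  refine (Finset.sum_le_sum hterm).trans ?_
  rw [← Finset.sum_mul]
  have hsum := sum_choose_le j₁ (n + 1)
  calc (∑ c ∈ Finset.range (n + 1), (j₁.choose c : ℝ)) *
        (N ^ j₁ * (((n : ℝ) + 1) ^ j₂ * X ^ j₂ * δ ^ n))
      ≤ 2 ^ j₁ * (N ^ j₁ * (((n : ℝ) + 1) ^ j₂ * X ^ j₂ * δ ^ n)) := by
        refine mul_le_mul_of_nonneg_right hsum (by positivity)
    _ = (2 * N) ^ j₁ * (((n : ℕ) + 1 : ℝ) * X) ^ j₂ * δ ^ n := by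
        rw [mul_pow, mul_pow]
        ring
    _ = (2 * N) ^ j₁ * (((n + 1 : ℕ) : ℝ) * X) ^ j₂ * δ ^ n := by push_cast; ring
end

section
/- Let k ≥ 1, 0 < δ < 1, X > 0, I a closed interval, and f ∈ C^k(I). If |f^{(i)}(x)/i!| ≤ X·δ^i for all 0 ≤ i < k and every x ∈ I, while |f^{(k)}(x)/k!| ≥ X·δ^k for every x ∈ I, then the length of I satisfies |I| ≤ 2/δ. -/
/-!
Apply the mean value theorem to `g = f^{(k-1)}` on `[a, b]`: the slope of `g` is at least
`X δ^k k!` in absolute value, while `|g(b) - g(a)| ≤ 2 X δ^(k-1) (k-1)!`. Hence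
`k δ (b - a) ≤ 2`, and `k ≥ 1` gives the claim.
-/

open Set Topology Nat

theorem ContDiffOn.hasDerivAt_iteratedDerivWithin {𝕜 F : Type*} [NontriviallyNormedField 𝕜]
    [NormedAddCommGroup F] [NormedSpace 𝕜 F] {f : 𝕜 → F} {s : Set 𝕜} {x : 𝕜} {n : ℕ}
    (hf : ContDiffOn 𝕜 (n + 1 : ℕ) f s) (hs : UniqueDiffOn 𝕜 s) (hx : s ∈ 𝓝 x) :
    HasDerivAt (iteratedDerivWithin n f s) (iteratedDerivWithin (n + 1) f s x) x := by
  rw [iteratedDerivWithin_succ]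
  have hdiff := hf.differentiableOn_iteratedDerivWithin (m := n) (by norm_cast; omega) hs
  exact (hdiff x (mem_of_mem_nhds hx)).hasDerivWithinAt.hasDerivAt hx

theorem mul_sub_le_abs_sub_of_le_abs_deriv {g g' : ℝ → ℝ} {a b m : ℝ} (hab : a < b)
    (hg : ContinuousOn g (Icc a b)) (hg' : ∀ x ∈ Ioo a b, HasDerivAt g (g' x) x)
    (hm : ∀ x ∈ Ioo a b, m ≤ |g' x|) : m * (b - a) ≤ |g b - g a| := by
  obtain ⟨c, hc, hslope⟩ := exists_hasDerivAt_eq_slope g g' hab hg hg'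
  have hba : 0 < b - a := sub_pos.2 hab
  calc m * (b - a) ≤ |g' c| * (b - a) := by gcongr; exact hm c hc
    _ = |g b - g a| := by rw [hslope, abs_div, abs_of_pos hba, div_mul_cancel₀ _ hba.ne']

theorem abs_div_factorial_le_iff {y B : ℝ} (i : ℕ) :
    |y / (i ! : ℝ)| ≤ B ↔ |y| ≤ B * i ! := by
  rw [abs_div, Nat.abs_cast, div_le_iff₀ (by positivity)]

theorem le_abs_div_factorial_iff {y B : ℝ} (i : ℕ) :
    B ≤ |y / (i ! : ℝ)| ↔ B * i ! ≤ |y| := by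
  rw [abs_div, Nat.abs_cast, le_div_iff₀ (by positivity)]

theorem stmt_3_general (k : ℕ) (hk : 1 ≤ k) (δ X : ℝ) (hδ0 : 0 < δ) (hX : 0 < X)
    (a b : ℝ) (hab : a < b)
    (f : ℝ → ℝ) (hf : ContDiffOn ℝ (k : ℕ) f (Icc a b))
    (hlow : ∀ i < k, ∀ x ∈ Icc a b,
      |iteratedDerivWithin i f (Icc a b) x / (Nat.factorial i : ℝ)| ≤ X * δ ^ i)
    (hhigh : ∀ x ∈ Icc a b,
      X * δ ^ k ≤ |iteratedDerivWithin k f (Icc a b) x / (Nat.factorial k : ℝ)|) :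
    b - a ≤ 2 / δ := by
  obtain ⟨n, rfl⟩ : ∃ n, k = n + 1 := ⟨k - 1, by omega⟩
  set s := Icc a b
  have hs : UniqueDiffOn ℝ s := uniqueDiffOn_Icc hab
  set g := iteratedDerivWithin n f s
  set P := X * δ ^ n * (n ! : ℝ)
  have hg_le : ∀ x ∈ s, |g x| ≤ P := fun x hx =>
    (abs_div_factorial_le_iff n).1 (hlow n n.lt_succ_self x hx)
  have hmvt : P * ((n + 1) * δ) * (b - a) ≤ |g b - g a| := by
    refine mul_sub_le_abs_sub_of_le_abs_deriv hab
      (hf.continuousOn_iteratedDerivWithin (by norm_cast; omega) hs)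
      (fun x hx => hf.hasDerivAt_iteratedDerivWithin hs (Icc_mem_nhds hx.1 hx.2))
      (fun x hx => ?_)
    have hx_high := (le_abs_div_factorial_iff (n + 1)).1 (hhigh x (Ioo_subset_Icc_self hx))
    rw [factorial_succ, pow_succ] at hx_high
    push_cast at hx_high
    linarith
  have htriangle : |g b - g a| ≤ 2 * P := by
    linarith [abs_sub (g b) (g a), hg_le b (right_mem_Icc.2 hab.le), hg_le a (left_mem_Icc.2 hab.le)]
  have hP : 0 < P := by positivity
  have hkδ : (n + 1) * δ * (b - a) ≤ 2 := by nlinarith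
  rw [le_div_iff₀ hδ0]
  nlinarith [sub_pos.2 hab, (by positivity : (0 : ℝ) ≤ n)]

/-- If the lower derivatives of `f` are small but the `k`-th derivative is large
throughout `I`, then `I` is short. -/
theorem stmt_3 (k : ℕ) (hk : 1 ≤ k) (δ X : ℝ) (hδ0 : 0 < δ) (hδ1 : δ < 1) (hX : 0 < X)
    (a b : ℝ) (hab : a < b)
    (f : ℝ → ℝ) (hf : ContDiffOn ℝ (k : ℕ) f (Icc a b))
    (hlow : ∀ i < k, ∀ x ∈ Icc a b,
      |iteratedDerivWithin i f (Icc a b) x / (Nat.factorial i : ℝ)| ≤ X * δ ^ i)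
    (hhigh : ∀ x ∈ Icc a b,
      X * δ ^ k ≤ |iteratedDerivWithin k f (Icc a b) x / (Nat.factorial k : ℝ)|) :
    b - a ≤ 2 / δ :=
  stmt_3_general k hk δ X hδ0 hX a b hab f hf hlow hhigh
end

section
/- Let I ⊂ ℝ be an interval, F ∈ ℝ[x,y] a polynomial, and f ∈ C^∞(I) with F(x, f(x)) = 0 for all x ∈ I. Write F_x, F_y for the partial derivatives of F. Then for each k ≥ 1, there exists a polynomial H_k ∈ ℝ[x,y] of total degree at most (k−1)(2d−3) + d − 1 (where d = deg F) such that H_k(x, f(x)) + F_y(x, f(x))^{2k−1} · f^{(k)}(x) = 0 for all x ∈ I. -/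
open Set MvPolynomial

private lemma pderiv_totalDegree_le (P : MvPolynomial (Fin 2) ℝ) (i : Fin 2) :
    (MvPolynomial.pderiv i P).totalDegree ≤ P.totalDegree - 1 := by
  classical
  conv_lhs => rw [P.as_sum]
  rw [map_sum]
  refine (MvPolynomial.totalDegree_finset_sum _ _).trans (Finset.sup_le fun v hv => ?_)
  rw [MvPolynomial.pderiv_monomial]
  rcases Nat.eq_zero_or_pos (v i) with h | h
  · simp [h]
  · refine (MvPolynomial.totalDegree_monomial_le _ _).trans ?_
    show (v - Finsupp.single i 1).sum (fun _ e => e) ≤ _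
    have hsum : v.sum (fun _ e => e) ≤ P.totalDegree := MvPolynomial.le_totalDegree hv
    have hvs : (v - Finsupp.single i 1) + Finsupp.single i 1 = v := by
      ext j
      simp only [Finsupp.add_apply, Finsupp.tsub_apply, Finsupp.single_apply]
      rcases eq_or_ne i j with rfl | hij
      · simp; omega
      · simp [hij]
    have : v.sum (fun _ e => e) =
        (v - Finsupp.single i 1).sum (fun _ e => e) + 1 := by
      conv_lhs => rw [← hvs]
      rw [Finsupp.sum_add_index' (fun _ => rfl) (fun _ _ _ => rfl)]
      simp [Finsupp.sum_single_index]
    omega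

private lemma pderiv_eq_zero_of_deg0 {Q : MvPolynomial (Fin 2) ℝ}
    (h : Q.totalDegree = 0) (i : Fin 2) : MvPolynomial.pderiv i Q = 0 := by
  classical
  conv_lhs => rw [Q.as_sum]
  rw [map_sum]
  refine Finset.sum_eq_zero fun v hv => ?_
  rw [MvPolynomial.pderiv_monomial]
  have := (MvPolynomial.totalDegree_eq_zero_iff _ Q).mp h v hv i
  simp [this]

private lemma totalDegree_mul_pderiv_le (P Q : MvPolynomial (Fin 2) ℝ) (i : Fin 2) :
    (P * MvPolynomial.pderiv i Q).totalDegree ≤ P.totalDegree + Q.totalDegree - 1 := by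
  rcases eq_or_ne (MvPolynomial.pderiv i Q) 0 with h | h
  · simp [h]
  · have h1 : 1 ≤ Q.totalDegree := by
      by_contra hq
      exact h (pderiv_eq_zero_of_deg0 (by omega) i)
    have h2 := pderiv_totalDegree_le Q i
    have := MvPolynomial.totalDegree_mul P (MvPolynomial.pderiv i Q)
    omega

private lemma eval_hasDerivWithinAt {f : ℝ → ℝ} {s : Set ℝ} {x : ℝ} {f' : ℝ}
    (hf : HasDerivWithinAt f f' s x) (P : MvPolynomial (Fin 2) ℝ) :
    HasDerivWithinAt (fun t => MvPolynomial.eval ![t, f t] P)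
      (MvPolynomial.eval ![x, f x] (MvPolynomial.pderiv 0 P) +
        MvPolynomial.eval ![x, f x] (MvPolynomial.pderiv 1 P) * f') s x := by
  induction P using MvPolynomial.induction_on with
  | C r => simpa using hasDerivWithinAt_const x s r
  | add p q hp hq =>
      have := hp.add hq
      convert this using 1
      · rfl
      · rfl
      · ext t; simp
      · simp only [map_add]; ring
  | mul_X p n hp =>
      fin_cases n
      · have := hp.mul (hasDerivWithinAt_id x s)
        convert this using 1
        · rfl
        · rfl
        · ext t; simp
        · simp only [pderiv_mul, pderiv_X, map_add, map_mul, eval_X]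
          simp [Pi.single_apply]
          ring
      · have := hp.mul hf
        convert this using 1
        · rfl
        · rfl
        · ext t; simp
        · simp only [pderiv_mul, pderiv_X, map_add, map_mul, eval_X]
          simp [Pi.single_apply]
          ring

/-- The polynomials `H_k` with `H_k(x,f) + F_y(x,f)^{2k-1} f^{(k)} = 0`. -/
theorem stmt_10 (a b : ℝ) (hab : a < b) (F : MvPolynomial (Fin 2) ℝ)
    (f : ℝ → ℝ) (hf : ContDiffOn ℝ (⊤ : ℕ∞) f (Icc a b))
    (hF : ∀ x ∈ Icc a b, MvPolynomial.eval ![x, f x] F = 0) :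
    ∀ k : ℕ, 1 ≤ k → ∃ H : MvPolynomial (Fin 2) ℝ,
      H.totalDegree ≤ (k - 1) * (2 * F.totalDegree - 3) + (F.totalDegree - 1) ∧
      ∀ x ∈ Icc a b,
        MvPolynomial.eval ![x, f x] H +
          (MvPolynomial.eval ![x, f x] (MvPolynomial.pderiv 1 F)) ^ (2 * k - 1) *
            iteratedDerivWithin k f (Icc a b) x = 0 := by
  have hsu : UniqueDiffOn ℝ (Icc a b) := uniqueDiffOn_Icc hab
  have hfd : DifferentiableOn ℝ f (Icc a b) := hf.differentiableOn (by simp)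
  -- the basic identity F_x + F_y f' = 0
  have hE1 : ∀ x ∈ Icc a b,
      MvPolynomial.eval ![x, f x] (MvPolynomial.pderiv 0 F) +
        MvPolynomial.eval ![x, f x] (MvPolynomial.pderiv 1 F) * derivWithin f (Icc a b) x = 0 := by
    intro x hx
    have hfx : HasDerivWithinAt f (derivWithin f (Icc a b) x) (Icc a b) x :=
      (hfd x hx).hasDerivWithinAt
    have h1 := eval_hasDerivWithinAt hfx F
    have h0 : HasDerivWithinAt (fun t => MvPolynomial.eval ![t, f t] F) 0 (Icc a b) x :=
      (hasDerivWithinAt_const x (Icc a b) 0).congr (fun y hy => hF y hy) (hF x hx)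
    have := h1.derivWithin (hsu x hx)
    rw [h0.derivWithin (hsu x hx)] at this
    exact this.symm
  intro k hk
  induction k, hk using Nat.le_induction with
  | base =>
      refine ⟨MvPolynomial.pderiv 0 F, by simpa using pderiv_totalDegree_le F 0, fun x hx => ?_⟩
      rw [iteratedDerivWithin_one]
      norm_num
      exact hE1 x hx
  | succ k hk ih =>
      obtain ⟨j, rfl⟩ : ∃ j, k = j + 1 := ⟨k - 1, by omega⟩
      obtain ⟨H, hHdeg, hHid⟩ := ih
      set Fy := MvPolynomial.pderiv 1 F with hFy
      set Fx := MvPolynomial.pderiv 0 F with hFx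
      refine ⟨Fy * Fy * MvPolynomial.pderiv 0 H - Fx * Fy * MvPolynomial.pderiv 1 H -
        MvPolynomial.C ((2 * j + 1 : ℕ) : ℝ) *
          (Fy * MvPolynomial.pderiv 0 Fy - Fx * MvPolynomial.pderiv 1 Fy) * H, ?_, ?_⟩
      · -- degree bound
        have hd1 : Fy.totalDegree ≤ F.totalDegree - 1 := pderiv_totalDegree_le F 1
        have hd0 : Fx.totalDegree ≤ F.totalDegree - 1 := pderiv_totalDegree_le F 0
        have hBk : H.totalDegree ≤ j * (2 * F.totalDegree - 3) + (F.totalDegree - 1) := by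
          simpa using hHdeg
        simp only [Nat.add_sub_cancel]
        rw [add_one_mul]
        refine (MvPolynomial.totalDegree_sub _ _).trans (max_le
          ((MvPolynomial.totalDegree_sub _ _).trans (max_le ?_ ?_)) ?_)
        · have hr := totalDegree_mul_pderiv_le (Fy * Fy) H 0
          have hm := MvPolynomial.totalDegree_mul Fy Fy
          generalize j * (2 * F.totalDegree - 3) = m at hBk ⊢
          omega
        · have hr := totalDegree_mul_pderiv_le (Fx * Fy) H 1
          have hm := MvPolynomial.totalDegree_mul Fx Fy
          generalize j * (2 * F.totalDegree - 3) = m at hBk ⊢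
          omega
        · have hr1 := totalDegree_mul_pderiv_le Fy Fy 0
          have hr2 := totalDegree_mul_pderiv_le Fx Fy 1
          have h3 := MvPolynomial.totalDegree_mul
            (MvPolynomial.C ((2 * j + 1 : ℕ) : ℝ))
            (Fy * MvPolynomial.pderiv 0 Fy - Fx * MvPolynomial.pderiv 1 Fy)
          have h4 := MvPolynomial.totalDegree_sub (Fy * MvPolynomial.pderiv 0 Fy)
            (Fx * MvPolynomial.pderiv 1 Fy)
          have h5 := MvPolynomial.totalDegree_mul
            (MvPolynomial.C ((2 * j + 1 : ℕ) : ℝ) *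
              (Fy * MvPolynomial.pderiv 0 Fy - Fx * MvPolynomial.pderiv 1 Fy)) H
          have hC : (MvPolynomial.C ((2 * j + 1 : ℕ) : ℝ) :
              MvPolynomial (Fin 2) ℝ).totalDegree = 0 := MvPolynomial.totalDegree_C _
          have h4' : (Fy * MvPolynomial.pderiv 0 Fy - Fx * MvPolynomial.pderiv 1 Fy).totalDegree ≤
              (F.totalDegree - 1) + (F.totalDegree - 1) - 1 :=
            h4.trans (sup_le (by omega) (by omega))
          generalize j * (2 * F.totalDegree - 3) = m at hBk ⊢
          omega
      · -- the identity
        intro x hx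
        have hfx : HasDerivWithinAt f (derivWithin f (Icc a b) x) (Icc a b) x :=
          (hfd x hx).hasDerivWithinAt
        set g := iteratedDerivWithin (j + 1) f (Icc a b) with hg
        -- g is differentiable with derivative the next iterated derivative
        have hgd : HasDerivWithinAt g (iteratedDerivWithin (j + 2) f (Icc a b) x) (Icc a b) x := by
          have hlt : ((j + 1 : ℕ) : WithTop ℕ∞) < ((⊤ : ℕ∞) : WithTop ℕ∞) := by
            exact_mod_cast ENat.coe_lt_top (j + 1)
          have hdiff : DifferentiableWithinAt ℝ g (Icc a b) x :=
            hf.differentiableOn_iteratedDerivWithin hlt hsu x hx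
          have := hdiff.hasDerivWithinAt
          rwa [show derivWithin g (Icc a b) x = iteratedDerivWithin (j + 2) f (Icc a b) x from
            (congrFun iteratedDerivWithin_succ x).symm] at this
        have hH' := eval_hasDerivWithinAt hfx H
        have hFy' := (eval_hasDerivWithinAt hfx Fy).pow (2 * (j + 1) - 1)
        have hphi := hH'.add ((hFy').mul hgd)
        have h0 : HasDerivWithinAt (fun t => MvPolynomial.eval ![t, f t] H +
            (MvPolynomial.eval ![t, f t] Fy) ^ (2 * (j + 1) - 1) * g t) 0 (Icc a b) x :=
          (hasDerivWithinAt_const x _ 0).congr (fun y hy => hHid y hy) (hHid x hx)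
        have ED := (h0.derivWithin (hsu x hx)).symm.trans (hphi.derivWithin (hsu x hx))
        simp only [Pi.pow_apply] at ED
        -- names for the real values
        have e1 : 2 * (j + 1) - 1 = 2 * j + 1 := by omega
        have e2 : 2 * (j + 1) - 1 - 1 = 2 * j := by omega
        have e3 : 2 * (j + 1 + 1) - 1 = 2 * j + 3 := by omega
        rw [e1, show 2 * j + 1 - 1 = 2 * j by omega] at ED
        rw [e1] at hHid
        have E2 := hHid x hx
        have E1 := hE1 x hx
        have ED2 := ED.symm
        rw [e3]
        simp only [map_sub, map_mul, MvPolynomial.eval_C]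
        rw [pow_add] at ED2 E2 ⊢
        rw [pow_one] at ED2 E2
        set u := (MvPolynomial.eval ![x, f x] Fy) ^ (2 * j) with hu
        push_cast at ED2 ⊢
        linear_combination
          ((MvPolynomial.eval ![x, f x] Fy) ^ 2) * ED2 -
          ((MvPolynomial.eval ![x, f x] Fy) * MvPolynomial.eval ![x, f x] (MvPolynomial.pderiv 1 H) +
            (2 * (j : ℝ) + 1) * MvPolynomial.eval ![x, f x] (MvPolynomial.pderiv 1 Fy) * u *
              (MvPolynomial.eval ![x, f x] Fy) * g x) * E1 +
          ((2 * (j : ℝ) + 1) * (MvPolynomial.eval ![x, f x] Fx *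
              MvPolynomial.eval ![x, f x] (MvPolynomial.pderiv 1 Fy) -
            MvPolynomial.eval ![x, f x] Fy *
              MvPolynomial.eval ![x, f x] (MvPolynomial.pderiv 0 Fy))) * E2
end

section
/- Let N ≥ 1 and let f : [0,N] → [0,N] be a strictly convex function. Then the number of integer points on the graph of f, i.e. |{(x, f(x)) : x ∈ [0,N]} ∩ ℤ²|, is O(N^{2/3}) with an absolute implied constant. -/
/-!
Order the lattice points on the graph by abscissa. By strict convexity the slopes of consecutive
chords strictly increase, so the difference vectors of consecutive points are pairwise distinct
and nonzero. Their ℓ¹-norms add up to at most `3N`: the horizontal parts telescope to at most `N`,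
and the vertical parts to at most `2N` because the ordinate first decreases, then increases.
Since only `O(T²)` integer vectors have norm at most `T`, `n` distinct nonzero vectors have
total norm `≳ n^{3/2}`, whence `n ≲ N^{2/3}`.
-/

def l1Norm (v : ℤ × ℤ) : ℕ := v.1.natAbs + v.2.natAbs

section
open Finset

theorem card_mul_succ_le_add_sum_l1Norm (V : Finset (ℤ × ℤ)) (T : ℕ) :
    #V * (T + 1) ≤ (2 * T + 1) ^ 2 * (T + 1) + ∑ v ∈ V, l1Norm v := by
  have hsmall : #(V.filter (l1Norm · ≤ T)) ≤ (2 * T + 1) ^ 2 :=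
    calc #(V.filter (l1Norm · ≤ T))
        ≤ #(Icc (-T : ℤ) T ×ˢ Icc (-T : ℤ) T) := by
          refine card_le_card fun v hv => ?_
          rw [mem_filter] at hv
          simp only [mem_product, mem_Icc, l1Norm] at hv ⊢
          omega
      _ = (2 * T + 1) ^ 2 := by
          rw [card_product, Int.card_Icc, sq]
          congr 1 <;> omega
  have hlarge : #(V.filter (¬ l1Norm · ≤ T)) * (T + 1) ≤ ∑ v ∈ V, l1Norm v :=
    calc #(V.filter (¬ l1Norm · ≤ T)) * (T + 1)
        ≤ ∑ v ∈ V.filter (¬ l1Norm · ≤ T), l1Norm v := by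
          rw [← smul_eq_mul]
          exact card_nsmul_le_sum _ _ _ fun v hv => by simp only [mem_filter] at hv; omega
      _ ≤ ∑ v ∈ V, l1Norm v := sum_le_sum_of_subset (filter_subset _ _)
  rw [← card_filter_add_card_filter_not (l1Norm · ≤ T), add_mul]
  exact add_le_add (Nat.mul_le_mul_right _ hsmall) hlarge

theorem card_pow_three_le_sum_l1Norm_sq (V : Finset (ℤ × ℤ)) (hV : (0 : ℤ × ℤ) ∉ V) :
    #V ^ 3 ≤ 72 * (∑ v ∈ V, l1Norm v) ^ 2 := by
  have hsplit := card_mul_succ_le_add_sum_l1Norm V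
  set n := #V
  set L := ∑ v ∈ V, l1Norm v
  have hnL : n ≤ L := by
    simpa using card_nsmul_le_sum V l1Norm 1 fun v hv => by
      obtain ⟨a, b⟩ := v
      have : (a, b) ≠ 0 := ne_of_mem_of_not_mem hv hV
      simp only [l1Norm, ne_eq, Prod.mk_eq_zero, not_and_or] at this ⊢
      omega
  rcases lt_or_ge n 18 with hn | hn
  · calc n ^ 3 = n * n ^ 2 := by ring
      _ ≤ 18 * L ^ 2 := Nat.mul_le_mul hn.le (Nat.pow_le_pow_left hnL 2)
      _ ≤ 72 * L ^ 2 := by omega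
  -- with this `T`, at most `n / 2` of the vectors have norm `≤ T`
  set T := Nat.sqrt (n / 18)
  have hT : 1 ≤ T := Nat.le_sqrt.2 (by omega)
  have hTT : 18 * (T * T) ≤ n :=
    (Nat.mul_le_mul_left 18 (Nat.sqrt_le _)).trans (Nat.mul_div_le n 18)
  have hnT : n < (T + 1) * (T + 1) * 18 :=
    (Nat.div_lt_iff_lt_mul (by norm_num)).1 (Nat.lt_succ_sqrt _)
  have hbox : 2 * (2 * T + 1) ^ 2 ≤ n := by nlinarith
  have hnTL : n * (T + 1) ≤ 2 * L := by
    nlinarith [hsplit T, Nat.mul_le_mul_right (T + 1) hbox]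
  calc n ^ 3 ≤ 18 * (n * (T + 1)) ^ 2 := by nlinarith
    _ ≤ 18 * (2 * L) ^ 2 := by gcongr
    _ = 72 * L ^ 2 := by ring

theorem exists_split_of_descents_downward_closed {y : ℕ → ℤ} {n : ℕ}
    (hdesc : ∀ i j, i ≤ j → j < n → y (j + 1) < y j → y (i + 1) < y i) :
    ∃ k ≤ n, (∀ i < k, y (i + 1) < y i) ∧ ∀ i, k ≤ i → i < n → y i ≤ y (i + 1) := by
  classical
  by_cases h : ∃ i, i < n ∧ y i ≤ y (i + 1)
  · refine ⟨Nat.find h, (Nat.find_spec h).1.le, fun i hi => ?_, fun i hki hin => ?_⟩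
    · exact not_le.1 fun hle => Nat.find_min h hi ⟨hi.trans (Nat.find_spec h).1, hle⟩
    · by_contra! hlt
      exact (Nat.find_spec h).2.not_gt (hdesc _ i hki hin hlt)
  · push Not at h
    exact ⟨n, le_rfl, h, fun i hni hin => absurd hin (not_lt.2 hni)⟩

theorem sum_abs_sub_le_two_mul {y : ℕ → ℤ} {n : ℕ} {M : ℤ} (hy : ∀ i ≤ n, y i ∈ Set.Icc 0 M)
    (hdesc : ∀ i j, i ≤ j → j < n → y (j + 1) < y j → y (i + 1) < y i) :
    ∑ i ∈ range n, |y (i + 1) - y i| ≤ 2 * M := by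
  obtain ⟨k, hkn, hanti, hmono⟩ := exists_split_of_descents_downward_closed hdesc
  have hfall : ∑ i ∈ range k, |y (i + 1) - y i| = y 0 - y k := by
    rw [← sum_range_sub']
    exact sum_congr rfl fun i hi => by
      rw [abs_of_neg (by linarith [hanti i (mem_range.1 hi)])]
      ring
  have hrise : ∑ i ∈ Ico k n, |y (i + 1) - y i| = y n - y k := by
    rw [← sum_Ico_sub _ hkn]
    exact sum_congr rfl fun i hi => by
      rw [mem_Ico] at hi
      rw [abs_of_nonneg (by linarith [hmono i hi.1 hi.2])]
  rw [← sum_range_add_sum_Ico _ hkn, hfall, hrise]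
  linarith [(hy 0 (Nat.zero_le n)).2, (hy k hkn).1, (hy n le_rfl).2]

theorem pow_three_le_of_lattice_slopes_strictMono {x y : ℕ → ℤ} {n : ℕ} {M : ℤ}
    (hx : ∀ i ≤ n, x i ∈ Set.Icc 0 M) (hy : ∀ i ≤ n, y i ∈ Set.Icc 0 M)
    (hxmono : ∀ i < n, x i < x (i + 1))
    (hslope : ∀ i j, i < j → j < n →
      (y (i + 1) - y i) * (x (j + 1) - x j) < (y (j + 1) - y j) * (x (i + 1) - x i)) :
    (n : ℤ) ^ 3 ≤ 648 * M ^ 2 := by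
  set step : ℕ → ℤ × ℤ := fun i => (x (i + 1) - x i, y (i + 1) - y i)
  have hinj : Set.InjOn step (range n) := by
    intro i hi j hj hij
    simp only [step, Prod.ext_iff] at hij
    by_contra hne
    rcases lt_or_gt_of_ne hne with h | h
    · exact (hslope i j h (mem_range.1 hj)).ne (by rw [hij.1, hij.2])
    · exact (hslope j i h (mem_range.1 hi)).ne (by rw [hij.1, hij.2])
  have hzero : (0 : ℤ × ℤ) ∉ (range n).image step := by
    simp only [mem_image, mem_range, step, Prod.ext_iff, not_exists, not_and]
    exact fun i hi hdx _ => (sub_pos.2 (hxmono i hi)).ne' hdx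
  have hdesc : ∀ i j, i ≤ j → j < n → y (j + 1) < y j → y (i + 1) < y i := by
    intro i j hij hj hyj
    rcases hij.eq_or_lt with rfl | hij
    · exact hyj
    -- `dy i * dx j < dy j * dx i < 0`
    · nlinarith [hslope i j hij hj, hxmono i (hij.trans hj), hxmono j hj]
  have hlength : ((∑ v ∈ (range n).image step, l1Norm v : ℕ) : ℤ) ≤ 3 * M := by
    have hrun : ∑ i ∈ range n, (x (i + 1) - x i) ≤ M := by
      rw [sum_range_sub]
      linarith [(hx 0 (Nat.zero_le n)).1, (hx n le_rfl).2]
    calc ((∑ v ∈ (range n).image step, l1Norm v : ℕ) : ℤ)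
        = ∑ i ∈ range n, ((x (i + 1) - x i) + |y (i + 1) - y i|) := by
          rw [sum_image hinj, Nat.cast_sum]
          refine sum_congr rfl fun i hi => ?_
          simp only [step, l1Norm, Nat.cast_add, Int.natCast_natAbs,
            abs_of_pos (sub_pos.2 (hxmono i (mem_range.1 hi)))]
      _ ≤ M + 2 * M := by
          rw [sum_add_distrib]
          exact add_le_add hrun (sum_abs_sub_le_two_mul hy hdesc)
      _ = 3 * M := by ring
  have hcount := card_pow_three_le_sum_l1Norm_sq _ hzero
  rw [card_image_of_injOn hinj, card_range] at hcount
  have hM : 0 ≤ M := (hx 0 (Nat.zero_le n)).1.trans (hx 0 (Nat.zero_le n)).2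
  calc (n : ℤ) ^ 3 ≤ 72 * ((∑ v ∈ (range n).image step, l1Norm v : ℕ) : ℤ) ^ 2 := by
        exact_mod_cast hcount
    _ ≤ 72 * (3 * M) ^ 2 := by gcongr
    _ = 648 * M ^ 2 := by ring

theorem Finset.exists_strictMonoOn_Iic_of_card_eq_succ {α : Type*} [LinearOrder α]
    (A : Finset α) {n : ℕ} (h : #A = n + 1) :
    ∃ x : ℕ → α, (∀ i, x i ∈ A) ∧ StrictMonoOn x (Set.Iic n) :=
  ⟨fun i => A.orderEmbOfFin h ⟨min i n, by omega⟩, fun _ => A.orderEmbOfFin_mem h _,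
    fun i hi j hj hij => (A.orderEmbOfFin h).strictMono <| by
      simp only [Set.mem_Iic] at hi hj
      simp only [Fin.mk_lt_mk]
      omega⟩

theorem card_sub_one_pow_three_le_of_slopes_strictMono (A : Finset ℤ) (g : ℤ → ℤ) {M : ℤ}
    (hA : ∀ a ∈ A, a ∈ Set.Icc 0 M ∧ g a ∈ Set.Icc 0 M)
    (hslope : ∀ a ∈ A, ∀ b ∈ A, ∀ c ∈ A, ∀ d ∈ A, a < b → b ≤ c → c < d →
      (g b - g a) * (d - c) < (g d - g c) * (b - a)) :
    ((#A : ℤ) - 1) ^ 3 ≤ 648 * M ^ 2 := by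
  rcases Nat.eq_zero_or_eq_succ_pred #A with h | h
  · rw [h, Nat.cast_zero]; nlinarith [sq_nonneg M]
  obtain ⟨x, hxA, hx⟩ := A.exists_strictMonoOn_Iic_of_card_eq_succ h
  have hlt : ∀ {i j}, i < j → j ≤ #A - 1 → x i < x j := fun hij hj =>
    hx (Set.mem_Iic.2 (hij.le.trans hj)) (Set.mem_Iic.2 hj) hij
  rw [h, Nat.cast_succ, add_sub_cancel_right]
  refine pow_three_le_of_lattice_slopes_strictMono (y := g ∘ x)
    (fun i _ => (hA _ (hxA i)).1) (fun i _ => (hA _ (hxA i)).2)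
    (fun i hi => hlt (Nat.lt_succ_self i) hi) fun i j hij hj => ?_
  exact hslope _ (hxA i) _ (hxA _) _ (hxA j) _ (hxA _) (hlt (Nat.lt_succ_self i) (by omega))
    (hx.monotoneOn (Set.mem_Iic.2 (by omega)) (Set.mem_Iic.2 (by omega)) hij)
    (hlt (Nat.lt_succ_self j) hj)

end

open Set

theorem StrictConvexOn.slope_lt_slope {s : Set ℝ} {f : ℝ → ℝ} (hf : StrictConvexOn ℝ s f)
    {a b c d : ℝ} (ha : a ∈ s) (hb : b ∈ s) (hc : c ∈ s) (hd : d ∈ s)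
    (hab : a < b) (hbc : b ≤ c) (hcd : c < d) :
    (f b - f a) / (b - a) < (f d - f c) / (d - c) := by
  rcases hbc.eq_or_lt with rfl | hbc
  · exact hf.slope_strict_mono_adjacent ha hd hab hcd
  · exact (hf.slope_strict_mono_adjacent ha hc hab hbc).trans
      (hf.slope_strict_mono_adjacent hb hd hbc hcd)

theorem StrictConvexOn.int_slope_lt_slope {s : Set ℝ} {f : ℝ → ℝ} (hf : StrictConvexOn ℝ s f)
    {A : Finset ℤ} {g : ℤ → ℤ} (hA : ∀ a ∈ A, (a : ℝ) ∈ s ∧ f a = g a) :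
    ∀ a ∈ A, ∀ b ∈ A, ∀ c ∈ A, ∀ d ∈ A, a < b → b ≤ c → c < d →
      (g b - g a) * (d - c) < (g d - g c) * (b - a) := by
  intro a ha b hb c hc d hd hab hbc hcd
  have h := hf.slope_lt_slope (hA a ha).1 (hA b hb).1 (hA c hc).1 (hA d hd).1
    (Int.cast_lt.2 hab) (Int.cast_le.2 hbc) (Int.cast_lt.2 hcd)
  rw [div_lt_div_iff₀ (sub_pos.2 (Int.cast_lt.2 hab)) (sub_pos.2 (Int.cast_lt.2 hcd)),
    (hA a ha).2, (hA b hb).2, (hA c hc).2, (hA d hd).2] at h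
  exact_mod_cast h

theorem le_mul_rpow_two_thirds_of_pow_three_le {k : ℕ} {M : ℤ} {N : ℝ} (hN : 1 ≤ N)
    (hM0 : 0 ≤ M) (hMN : (M : ℝ) ≤ N) (h : ((k : ℤ) - 1) ^ 3 ≤ 648 * M ^ 2) :
    (k : ℝ) ≤ 10 * N ^ ((2 : ℝ) / 3) := by
  have hone : 1 ≤ N ^ ((2 : ℝ) / 3) := Real.one_le_rpow hN (by norm_num)
  rcases Nat.eq_zero_or_pos k with rfl | hk
  · norm_num; positivity
  have hcube : (N ^ ((2 : ℝ) / 3)) ^ 3 = N ^ 2 := by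
    rw [← Real.rpow_natCast, ← Real.rpow_mul (by linarith)]
    norm_num
  have hk' : ((k : ℝ) - 1) ^ 3 ≤ (9 * N ^ ((2 : ℝ) / 3)) ^ 3 := by
    have h' : ((k : ℝ) - 1) ^ 3 ≤ 648 * (M : ℝ) ^ 2 := by exact_mod_cast h
    rw [mul_pow, hcube]
    nlinarith [mul_le_mul hMN hMN (Int.cast_nonneg hM0) (by linarith)]
  have := le_of_pow_le_pow_left₀ three_ne_zero (by positivity) hk'
  linarith

/-- Jarník's upper bound: a strictly convex function `[0,N] → [0,N]` has
`O(N^{2/3})` integer points on its graph, with absolute constant. -/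
theorem stmt_13 :
    ∃ C : ℝ, 0 < C ∧ ∀ N : ℝ, 1 ≤ N → ∀ f : ℝ → ℝ,
      StrictConvexOn ℝ (Icc 0 N) f →
      (∀ x ∈ Icc (0 : ℝ) N, f x ∈ Icc (0 : ℝ) N) →
      {p : ℤ × ℤ | (p.1 : ℝ) ∈ Icc (0 : ℝ) N ∧ f p.1 = (p.2 : ℝ)}.Finite ∧
      ({p : ℤ × ℤ | (p.1 : ℝ) ∈ Icc (0 : ℝ) N ∧ f p.1 = (p.2 : ℝ)}.ncard : ℝ) ≤
        C * N ^ ((2 : ℝ) / 3) := by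
  refine ⟨10, by norm_num, fun N hN f hf hmaps => ?_⟩
  set S := {p : ℤ × ℤ | (p.1 : ℝ) ∈ Icc (0 : ℝ) N ∧ f p.1 = (p.2 : ℝ)}
  have hfloor : ∀ t ∈ Icc (0 : ℝ) N, ⌊t⌋ ∈ Icc 0 ⌊N⌋ := fun t ht =>
    ⟨Int.floor_nonneg.2 ht.1, Int.floor_le_floor ht.2⟩
  have hmem : ∀ p ∈ S, p.1 ∈ Icc 0 ⌊N⌋ ∧ p.2 ∈ Icc 0 ⌊N⌋ := fun p hp => by
    have h2 := hmaps _ hp.1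
    rw [hp.2] at h2
    simpa using And.intro (hfloor _ hp.1) (hfloor _ h2)
  have hfin : S.Finite := ((finite_Icc 0 ⌊N⌋).prod (finite_Icc 0 ⌊N⌋)).subset hmem
  refine ⟨hfin, ?_⟩
  have hinj : S.InjOn Prod.fst := fun p hp q hq h =>
    Prod.ext h (by exact_mod_cast hp.2.symm.trans (h ▸ hq.2))
  set A := (hfin.image Prod.fst).toFinset
  have hA : ∀ a ∈ A, (a : ℝ) ∈ Icc 0 N ∧ f a = ⌊f a⌋ := by
    intro a ha
    obtain ⟨p, hp, rfl⟩ := (hfin.image Prod.fst).mem_toFinset.1 ha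
    refine ⟨hp.1, ?_⟩
    rw [hp.2, Int.floor_intCast]
  rw [← hinj.ncard_image, ncard_eq_toFinset_card _ (hfin.image _)]
  refine le_mul_rpow_two_thirds_of_pow_three_le hN (Int.floor_nonneg.2 (by linarith))
    (Int.floor_le N) ?_
  refine card_sub_one_pow_three_le_of_slopes_strictMono A (fun a => ⌊f a⌋) (fun a ha => ?_)
    (hf.int_slope_lt_slope hA)
  exact ⟨by simpa using hfloor _ (hA a ha).1, hfloor _ (hmaps _ (hA a ha).1)⟩
end

section
/- For every sufficiently large N there exists a strictly convex function f : [0,N] → [0,N] such that |{(x, f(x)) : x ∈ [0,N]} ∩ ℤ²| ≫ N^{2/3}, with an absolute implied constant. -/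
/-!
The reduced fractions `a / (a + q)` with `1 ≤ a, q ≤ H` are `≫ H²` distinct slopes in `(0, 1)`
with denominators at most `2H` (the non-coprime pairs are few because `∑_{d ≥ 2} d⁻² < 1`).
Laying the primitive vectors `(den, num)` end to end in order of increasing slope gives a convex
lattice polygon of width at most `2H³`. Points with strictly increasing chord slopes always lie on
a strictly convex function: subtract `a x²` with `a` so small that the chord slopes stay monotone,
interpolate by the maximum of the chord lines, and add `a x²` back. Two extra nodes `(-1, 0)` and
`(N, ·)`, of slopes `0` and `1`, keep the graph inside `[0, N]²`, and `H ≍ N^{1/3}` gives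
`≫ N^{2/3}` lattice points.
-/

open Set Filter Topology

theorem StrictConvexOn.const_mul {s : Set ℝ} {f : ℝ → ℝ} (hf : StrictConvexOn ℝ s f) {c : ℝ}
    (hc : 0 < c) : StrictConvexOn ℝ s fun x => c * f x := by
  refine ⟨hf.1, fun x hx y hy hxy a b ha hb hab => ?_⟩
  have := mul_lt_mul_of_pos_left (hf.2 hx hy hxy ha hb hab) hc
  simp only [smul_eq_mul] at this ⊢
  linear_combination this

theorem ConvexOn.finset_sup' {ι : Type*} {s : Set ℝ} {t : Finset ι} (ht : t.Nonempty)
    {f : ι → ℝ → ℝ} (hf : ∀ i ∈ t, ConvexOn ℝ s (f i)) : ConvexOn ℝ s (t.sup' ht f) :=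
  Finset.sup'_induction ht f (fun _ h₁ _ h₂ => h₁.sup h₂) hf

theorem convexOn_affine {s : Set ℝ} (hs : Convex ℝ s) (c d : ℝ) :
    ConvexOn ℝ s fun x => c * x + d :=
  (LinearMap.convexOn (LinearMap.mulLeft ℝ c) hs).add_const d

noncomputable def chordSlope (x y : ℕ → ℝ) (i : ℕ) : ℝ := (y (i + 1) - y i) / (x (i + 1) - x i)

section ChordSlope

variable {x y : ℕ → ℝ} {n i : ℕ}

theorem add_chordSlope_mul_succ (hx : x i ≠ x (i + 1)) :
    y i + chordSlope x y i * (x (i + 1) - x i) = y (i + 1) := by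
  rw [chordSlope, div_mul_cancel₀ _ (sub_ne_zero.2 hx.symm)]
  ring

theorem chordSlope_sub_mul_sq (a : ℝ) (hx : x i ≠ x (i + 1)) :
    chordSlope x (fun j => y j - a * x j ^ 2) i = chordSlope x y i - a * (x i + x (i + 1)) := by
  have := sub_ne_zero.2 hx.symm
  simp only [chordSlope]
  field_simp
  ring

theorem add_chordSlope_mul_le (hx : StrictMonoOn x (Iic n))
    (hs : MonotoneOn (chordSlope x y) (Iio n)) {k j : ℕ} (hk : k < n) (hj : j ≤ n) :
    y k + chordSlope x y k * (x j - x k) ≤ y j := by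
  have hstep : ∀ i < n, y (i + 1) = y i + chordSlope x y i * (x (i + 1) - x i) := fun i hi =>
    (add_chordSlope_mul_succ (hx (mem_Iic.2 hi.le) (mem_Iic.2 hi) i.lt_succ_self).ne).symm
  have hw : ∀ i < n, 0 ≤ x (i + 1) - x i := fun i hi =>
    sub_nonneg.2 (hx.monotoneOn (mem_Iic.2 hi.le) (mem_Iic.2 hi) i.le_succ)
  rcases le_total k j with hkj | hjk
  · induction j, hkj using Nat.le_induction with
    | base => simp
    | succ i hki ih =>
      have hi : i < n := by omega
      have := hs (mem_Iio.2 hk) (mem_Iio.2 hi) hki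
      rw [hstep i hi]
      nlinarith [ih hi.le, hw i hi]
  · induction hjk using Nat.decreasingInduction with
    | self => simp
    | of_succ i hik ih =>
      have hi : i < n := by omega
      have := hs (mem_Iio.2 hi) (mem_Iio.2 hk) hik.le
      rw [hstep i hi] at ih
      nlinarith [ih (by omega), hw i hi]

theorem exists_convexOn_interpolating (hn : 0 < n) (hx : StrictMonoOn x (Iic n))
    (hs : MonotoneOn (chordSlope x y) (Iio n)) :
    ∃ g : ℝ → ℝ, ConvexOn ℝ univ g ∧ ∀ j ≤ n, g (x j) = y j := by
  let line : ℕ → ℝ → ℝ := fun k t => chordSlope x y k * t + (y k - chordSlope x y k * x k)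
  have hne : (Finset.range n).Nonempty := Finset.nonempty_range_iff.2 hn.ne'
  refine ⟨(Finset.range n).sup' hne line,
    ConvexOn.finset_sup' hne fun k _ => convexOn_affine convex_univ _ _, fun j hj => ?_⟩
  rw [Finset.sup'_apply]
  refine le_antisymm (Finset.sup'_le _ _ fun k hk => ?_) ?_
  · have := add_chordSlope_mul_le hx hs (Finset.mem_range.1 hk) hj
    linarith
  · obtain ⟨k, hk, hline⟩ : ∃ k < n, line k (x j) = y j := by
      rcases hj.lt_or_eq with hj | rfl
      · exact ⟨j, hj, by simp only [line]; ring⟩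
      · obtain ⟨k, rfl⟩ := Nat.exists_eq_add_one_of_ne_zero hn.ne'
        have := add_chordSlope_mul_succ (y := y)
          (hx (mem_Iic.2 k.le_succ) (mem_Iic.2 le_rfl) k.lt_succ_self).ne
        exact ⟨k, k.lt_succ_self, by simp only [line]; linarith⟩
    exact hline ▸ Finset.le_sup' (fun k => line k (x j)) (Finset.mem_range.2 hk)

theorem exists_strictConvexOn_interpolating (hn : 0 < n) (hx : StrictMonoOn x (Iic n))
    (hs : StrictMonoOn (chordSlope x y) (Iio n)) :
    ∃ f : ℝ → ℝ, StrictConvexOn ℝ univ f ∧ ∀ j ≤ n, f (x j) = y j := by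
  have hne : ∀ i < n, x i ≠ x (i + 1) := fun i hi =>
    (hx (mem_Iic.2 hi.le) (mem_Iic.2 hi) i.lt_succ_self).ne
  -- a curvature `a` small enough that subtracting `a x²` keeps the chord slopes monotone
  obtain ⟨a, hgap, ha⟩ : ∃ a : ℝ, (∀ p ∈ Finset.range n ×ˢ Finset.range n, p.1 < p.2 →
      a * (x p.2 + x (p.2 + 1) - (x p.1 + x (p.1 + 1))) < chordSlope x y p.2 - chordSlope x y p.1)
      ∧ 0 < a := by
    refine (((eventually_all_finset _).2 fun p hp => ?_).filter_mono nhdsWithin_le_nhds).and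
      self_mem_nhdsWithin |>.exists (f := 𝓝[>] (0 : ℝ))
    by_cases h : p.1 < p.2
    · have hpos := sub_pos.2 (hs (mem_Iio.2 (Finset.mem_range.1 (Finset.mem_product.1 hp).1))
        (mem_Iio.2 (Finset.mem_range.1 (Finset.mem_product.1 hp).2)) h)
      exact ((continuous_mul_const _).tendsto' 0 0 (zero_mul _)).eventually_lt_const hpos
        |>.mono fun _ h' _ => h'
    · exact Eventually.of_forall fun _ h' => absurd h' h
  have hshift : MonotoneOn (chordSlope x fun j => y j - a * x j ^ 2) (Iio n) := by
    intro i hi j hj hij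
    rw [chordSlope_sub_mul_sq a (hne i hi), chordSlope_sub_mul_sq a (hne j hj)]
    rcases hij.lt_or_eq with hij | rfl
    · have := hgap (i, j)
        (Finset.mem_product.2 ⟨Finset.mem_range.2 hi, Finset.mem_range.2 hj⟩) hij
      simp only at this
      linarith
    · rfl
  obtain ⟨g, hg, hgx⟩ := exists_convexOn_interpolating hn hx hshift
  refine ⟨fun t => a * t ^ 2 + g t,
    ((Even.strictConvexOn_pow even_two two_ne_zero).const_mul ha).add_convexOn hg, fun j hj => ?_⟩
  simp only [hgx j hj]
  ring

end ChordSlope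

def borderSeq {α : Type*} (u : ℕ → α) (m : ℕ) (first last : α) : ℕ → α
  | 0 => first
  | j + 1 => if j < m then u j else last

theorem strictMonoOn_borderSeq {α : Type*} [Preorder α] {u : ℕ → α} {m : ℕ} {a b : α}
    (hu : StrictMonoOn u (Iio m)) (ha : ∀ k < m, a < u k) (hb : ∀ k < m, u k < b) (hab : a < b) :
    StrictMonoOn (borderSeq u m a b) (Iic (m + 1)) := by
  refine strictMonoOn_Iic_of_lt_succ fun i hi => ?_
  rw [Order.succ_eq_add_one]
  rcases i with _ | j
  · simp only [borderSeq]
    split_ifs with h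
    exacts [ha 0 h, hab]
  · have hj : j < m := by omega
    simp only [borderSeq, if_pos hj]
    split_ifs with h
    exacts [hu hj h j.lt_succ_self, hb j hj]

theorem exists_strictConvexOn_Icc_through_partial_sums {m : ℕ} {r : ℕ → ℚ}
    (hr : StrictMonoOn r (Iio m)) (hr0 : ∀ k < m, 0 < r k) (hr1 : ∀ k < m, r k < 1) {N : ℝ}
    (hN : ∑ k ∈ Finset.range m, ((r k).den : ℝ) < N) :
    ∃ f : ℝ → ℝ, StrictConvexOn ℝ (Icc 0 N) f ∧ (∀ x ∈ Icc (0 : ℝ) N, f x ∈ Icc (0 : ℝ) N) ∧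
      ∀ j ≤ m, (∑ k ∈ Finset.range j, ((r k).den : ℝ)) ∈ Icc 0 N ∧
        f (∑ k ∈ Finset.range j, ((r k).den : ℝ)) = ∑ k ∈ Finset.range j, ((r k).num : ℝ) := by
  set X : ℕ → ℝ := fun j => ∑ k ∈ Finset.range j, ((r k).den : ℝ)
  set Y : ℕ → ℝ := fun j => ∑ k ∈ Finset.range j, ((r k).num : ℝ)
  have hX : StrictMono X := strictMono_nat_of_lt_succ fun j => by
    simp [X, Finset.sum_range_succ, (r j).den_pos]
  have hX0 : ∀ j, 0 ≤ X j := fun j => Finset.sum_nonneg fun _ _ => Nat.cast_nonneg _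
  have hXN : ∀ j ≤ m, X j < N := fun j hj => (hX.monotone hj).trans_lt hN
  have hYX : Y m ≤ X m := Finset.sum_le_sum fun k hk => by
    exact_mod_cast Rat.num_le_denom_iff.2 (hr1 k (Finset.mem_range.1 hk)).le
  -- the nodes `(-1, 0), (X 0, Y 0), …, (X m, Y m), (N, Y m + (N - X m))`
  set xs := borderSeq X (m + 1) (-1) N
  set ys := borderSeq Y (m + 1) 0 (Y m + (N - X m))
  have hxs : StrictMonoOn xs (Iic (m + 2)) :=
    strictMonoOn_borderSeq (hX.strictMonoOn _) (fun k _ => by linarith [hX0 k])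
      (fun k hk => hXN k (by omega)) (by linarith [hX0 m, hXN m le_rfl])
  have hslope : EqOn (chordSlope xs ys) (borderSeq (fun k => (r k : ℝ)) m 0 1) (Iio (m + 2)) := by
    intro i hi
    rcases i with _ | j
    · simp [chordSlope, xs, ys, borderSeq, X, Y]
    · rcases Nat.lt_or_ge j m with hj | hj
      · simp [chordSlope, xs, ys, borderSeq, X, Y, hj, hj.le, Finset.sum_range_succ, Rat.cast_def]
      · obtain rfl : j = m := by simp only [mem_Iio] at hi; omega
        have : N - X j ≠ 0 := (sub_pos.2 (hXN j le_rfl)).ne'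
        simp [chordSlope, xs, ys, borderSeq, this]
  have hs : StrictMonoOn (chordSlope xs ys) (Iio (m + 2)) := by
    intro i hi j hj hij
    rw [hslope hi, hslope hj]
    refine strictMonoOn_borderSeq (fun i hi j hj hij => Rat.cast_lt.2 (hr hi hj hij))
      (fun k hk => Rat.cast_pos.2 (hr0 k hk)) (fun k hk => by exact_mod_cast hr1 k hk) one_pos
      (Nat.lt_succ_iff.1 hi) (Nat.lt_succ_iff.1 hj) hij
  obtain ⟨f, hf, hnodes⟩ := exists_strictConvexOn_interpolating (by omega) hxs hs
  have hf_neg_one : f (-1) = 0 := hnodes 0 (by omega)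
  have hf0 : f 0 = 0 := by simpa [xs, ys, borderSeq, X, Y] using hnodes 1 (by omega)
  have hfN : f N = Y m + (N - X m) := by simpa [xs, ys, borderSeq] using hnodes (m + 2) le_rfl
  refine ⟨f, hf.subset (subset_univ _) (convex_Icc 0 N), fun t ht => ⟨?_, ?_⟩,
    fun j hj => ⟨⟨hX0 j, (hXN j hj).le⟩, ?_⟩⟩
  · -- `f (-1) = f 0`, so by convexity `f` does not decrease to the right of `0`
    simpa [hf0] using hf.convexOn.le_right_of_left_le'' (mem_univ (-1)) (mem_univ t)
      (by norm_num : (-1 : ℝ) < 0) ht.1 (by rw [hf_neg_one, hf0])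
  · refine (hf.convexOn.le_max_of_mem_Icc (mem_univ 0) (mem_univ N) ht).trans ?_
    rw [hf0, hfN]
    exact max_le (hX0 m |>.trans (hXN m le_rfl).le) (by linarith)
  · simpa [xs, ys, borderSeq, Nat.lt_succ_of_le hj] using hnodes (j + 1) (by omega)

theorem Nat.Coprime.num_den_div_add {a q : ℕ} (h : a.Coprime q) :
    ((a : ℚ) / (a + q)).num = a ∧ ((a : ℚ) / (a + q)).den = a + q := by
  have hpos : (0 : ℤ) < ((a + q : ℕ) : ℤ) := by
    refine Int.natCast_pos.2 (Nat.pos_of_ne_zero fun h0 => ?_)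
    obtain ⟨rfl, rfl⟩ := Nat.add_eq_zero_iff.1 h0
    simp at h
  have hcop : Nat.Coprime (a : ℤ).natAbs ((a + q : ℕ) : ℤ).natAbs := by
    simpa only [Int.natAbs_natCast] using Nat.coprime_self_add_right.2 h
  have hnum := Rat.num_div_eq_of_coprime hpos hcop
  have hden := Rat.den_div_eq_of_coprime hpos hcop
  push_cast at hnum hden
  exact ⟨hnum, by exact_mod_cast hden⟩

theorem sum_Icc_two_inv_sq_le (H : ℕ) : ∑ d ∈ Finset.Icc 2 H, ((d : ℝ) ^ 2)⁻¹ ≤ 11 / 12 :=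
  calc ∑ d ∈ Finset.Icc 2 H, ((d : ℝ) ^ 2)⁻¹
      ≤ ∑ d ∈ insert 2 (Finset.Ioo 2 (H + 1)), ((d : ℝ) ^ 2)⁻¹ :=
        Finset.sum_le_sum_of_subset_of_nonneg (fun d hd => by simp at hd ⊢; omega)
          fun _ _ _ => by positivity
    _ = 1 / 4 + ∑ d ∈ Finset.Ioo 2 (H + 1), ((d : ℝ) ^ 2)⁻¹ := by
        rw [Finset.sum_insert (by simp)]; norm_num
    _ ≤ 1 / 4 + 2 / (2 + 1) := by gcongr; exact_mod_cast sum_Ioo_inv_sq_le 2 (H + 1)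
    _ = 11 / 12 := by norm_num

theorem card_coprime_pairs_ge (H : ℕ) :
    (H : ℝ) ^ 2 / 12 ≤
      ((Finset.Icc 1 H ×ˢ Finset.Icc 1 H).filter fun p => p.1.Coprime p.2).card := by
  set B := Finset.Icc 1 H
  set multiples : ℕ → Finset ℕ := fun d => B.filter (d ∣ ·)
  have hcover : ((B ×ˢ B).filter fun p => ¬ p.1.Coprime p.2) ⊆
      (Finset.Icc 2 H).biUnion fun d => multiples d ×ˢ multiples d := by
    intro p hp
    simp only [Finset.mem_filter, Finset.mem_product, B, Finset.mem_Icc] at hp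
    have hd2 : 2 ≤ p.1.gcd p.2 := by
      have := Nat.gcd_pos_of_pos_left p.2 (by omega : 0 < p.1)
      have : p.1.gcd p.2 ≠ 1 := hp.2
      omega
    have hdH : p.1.gcd p.2 ≤ H := (Nat.gcd_le_left _ (by omega)).trans hp.1.1.2
    simp only [Finset.mem_biUnion, Finset.mem_product, Finset.mem_filter, multiples, B,
      Finset.mem_Icc]
    exact ⟨_, ⟨hd2, hdH⟩, ⟨hp.1.1, Nat.gcd_dvd_left _ _⟩, ⟨hp.1.2, Nat.gcd_dvd_right _ _⟩⟩
  have hmultiples :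
      ∀ d, ((multiples d ×ˢ multiples d).card : ℝ) ≤ (H : ℝ) ^ 2 * ((d : ℝ) ^ 2)⁻¹ := by
    intro d
    have hcard : (multiples d).card = H / d := Nat.Ioc_filter_dvd_card_eq_div H d
    rw [Finset.card_product, hcard, Nat.cast_mul, ← sq, ← div_eq_mul_inv, ← div_pow]
    gcongr
    exact Nat.cast_div_le
  have hbad : (((B ×ˢ B).filter fun p => ¬ p.1.Coprime p.2).card : ℝ) ≤ 11 / 12 * (H : ℝ) ^ 2 :=
    calc _ ≤ (((Finset.Icc 2 H).biUnion fun d => multiples d ×ˢ multiples d).card : ℝ) := by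
          exact_mod_cast Finset.card_le_card hcover
      _ ≤ ∑ d ∈ Finset.Icc 2 H, ((multiples d ×ˢ multiples d).card : ℝ) := by
          exact_mod_cast Finset.card_biUnion_le
      _ ≤ ∑ d ∈ Finset.Icc 2 H, (H : ℝ) ^ 2 * ((d : ℝ) ^ 2)⁻¹ :=
          Finset.sum_le_sum fun d _ => hmultiples d
      _ ≤ 11 / 12 * (H : ℝ) ^ 2 := by
          rw [← Finset.mul_sum, mul_comm]
          gcongr
          exact sum_Icc_two_inv_sq_le H
  have htotal := Finset.card_filter_add_card_filter_not (s := B ×ˢ B)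
    (fun p : ℕ × ℕ => p.1.Coprime p.2)
  rw [Finset.card_product, Nat.card_Icc, Nat.add_sub_cancel, ← sq] at htotal
  have : (((B ×ˢ B).filter fun p => p.1.Coprime p.2).card : ℝ) +
      (((B ×ˢ B).filter fun p => ¬ p.1.Coprime p.2).card : ℝ) = (H : ℝ) ^ 2 := by
    exact_mod_cast htotal
  linarith

theorem exists_strictMonoOn_fractions (H : ℕ) : ∃ (m : ℕ) (r : ℕ → ℚ), StrictMonoOn r (Iio m) ∧
    (∀ k < m, 0 < r k ∧ r k < 1 ∧ (r k).den ≤ 2 * H) ∧ (H : ℝ) ^ 2 / 12 ≤ m ∧ m ≤ H ^ 2 := by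
  set C := (Finset.Icc 1 H ×ˢ Finset.Icc 1 H).filter fun p => p.1.Coprime p.2
  have hC : ∀ p ∈ C, 1 ≤ p.1 ∧ p.1 ≤ H ∧ 1 ≤ p.2 ∧ p.2 ≤ H ∧ p.1.Coprime p.2 := by
    intro p hp
    simp only [C, Finset.mem_filter, Finset.mem_product, Finset.mem_Icc] at hp
    exact ⟨hp.1.1.1, hp.1.1.2, hp.1.2.1, hp.1.2.2, hp.2⟩
  set S := C.image fun p => (p.1 : ℚ) / (p.1 + p.2)
  have hS : ∀ s ∈ S, 0 < s ∧ s < 1 ∧ s.den ≤ 2 * H := by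
    simp only [S, Finset.mem_image]
    rintro _ ⟨p, hp, rfl⟩
    obtain ⟨h1, h2, h3, h4, hcop⟩ := hC p hp
    refine ⟨by positivity, (div_lt_one (by positivity)).2 (by simp; omega), ?_⟩
    rw [hcop.num_den_div_add.2]
    omega
  have hcard : S.card = C.card := Finset.card_image_of_injOn fun p hp p' hp' hpp' => by
    have e := (Finset.mem_filter.1 hp).2.num_den_div_add
    have e' := (Finset.mem_filter.1 hp').2.num_den_div_add
    rw [hpp'] at e
    have h1 : p.1 = p'.1 := by exact_mod_cast e.1.symm.trans e'.1
    have h2 : p.1 + p.2 = p'.1 + p'.2 := e.2.symm.trans e'.2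
    exact Prod.ext h1 (by omega)
  refine ⟨S.card, fun k => if h : k < S.card then S.orderEmbOfFin rfl ⟨k, h⟩ else 0,
    fun i hi j hj hij => ?_, fun k hk => ?_, hcard ▸ card_coprime_pairs_ge H, ?_⟩
  · simp only [dif_pos (mem_Iio.1 hi), dif_pos (mem_Iio.1 hj)]
    exact (S.orderEmbOfFin rfl).strictMono hij
  · simpa only [dif_pos hk] using hS _ (S.orderEmbOfFin_mem rfl _)
  · calc S.card = C.card := hcard
      _ ≤ (Finset.Icc 1 H ×ˢ Finset.Icc 1 H).card := Finset.card_filter_le _ _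
      _ = H ^ 2 := by simp [sq]

def latticePointsOnGraph (f : ℝ → ℝ) (N : ℝ) : Set (ℤ × ℤ) :=
  {p | (p.1 : ℝ) ∈ Icc (0 : ℝ) N ∧ f p.1 = (p.2 : ℝ)}

theorem finite_latticePointsOnGraph (f : ℝ → ℝ) (N : ℝ) : (latticePointsOnGraph f N).Finite := by
  refine ((Icc (0 : ℤ) ⌈N⌉).toFinite.image fun z : ℤ => (z, ⌊f z⌋)).subset ?_
  rintro ⟨a, b⟩ ⟨⟨ha0, haN⟩, hab⟩
  exact ⟨a, ⟨by exact_mod_cast ha0, Int.cast_le.1 (haN.trans (Int.le_ceil N))⟩, by simp [hab]⟩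

theorem exists_strictConvexOn_many_latticePointsOnGraph (H : ℕ) {N : ℝ}
    (hN : 2 * (H : ℝ) ^ 3 < N) :
    ∃ f : ℝ → ℝ, StrictConvexOn ℝ (Icc 0 N) f ∧ (∀ x ∈ Icc (0 : ℝ) N, f x ∈ Icc (0 : ℝ) N) ∧
      (H : ℝ) ^ 2 / 12 ≤ (latticePointsOnGraph f N).ncard := by
  obtain ⟨m, r, hr, hr_mem, hm, hmH⟩ := exists_strictMonoOn_fractions H
  have hwidth : ∑ k ∈ Finset.range m, ((r k).den : ℝ) < N :=
    calc ∑ k ∈ Finset.range m, ((r k).den : ℝ) ≤ ∑ k ∈ Finset.range m, (2 * H : ℝ) :=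
          Finset.sum_le_sum fun k hk => by exact_mod_cast (hr_mem k (Finset.mem_range.1 hk)).2.2
      _ ≤ H ^ 2 * (2 * H) := by
          rw [Finset.sum_const, Finset.card_range, nsmul_eq_mul]
          gcongr
          exact_mod_cast hmH
      _ < N := by linarith
  obtain ⟨f, hf, hmaps, hnodes⟩ := exists_strictConvexOn_Icc_through_partial_sums hr
    (fun k hk => (hr_mem k hk).1) (fun k hk => (hr_mem k hk).2.1) hwidth
  refine ⟨f, hf, hmaps, ?_⟩
  let P : ℕ → ℤ × ℤ := fun j =>
    (∑ k ∈ Finset.range j, ((r k).den : ℤ), ∑ k ∈ Finset.range j, (r k).num)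
  have hP : Function.Injective P := by
    have : StrictMono fun j => ∑ k ∈ Finset.range j, ((r k).den : ℤ) :=
      strictMono_nat_of_lt_succ fun j => by simp [Finset.sum_range_succ, (r j).den_pos]
    exact fun i j hij => this.injective (congrArg Prod.fst hij)
  have hPf : ↑((Finset.range (m + 1)).image P) ⊆ latticePointsOnGraph f N := by
    simp only [Finset.coe_image, Finset.coe_range, image_subset_iff]
    intro j hj
    simp only [latticePointsOnGraph, P, mem_preimage, mem_ofPred_eq]
    push_cast
    exact hnodes j (Nat.lt_succ_iff.1 hj)
  calc (H : ℝ) ^ 2 / 12 ≤ m + 1 := by linarith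
    _ = ((Finset.range (m + 1)).image P).card := by
        rw [Finset.card_image_of_injective _ hP, Finset.card_range]; push_cast; ring
    _ ≤ (latticePointsOnGraph f N).ncard := by
        rw [← Set.ncard_coe_finset]
        exact_mod_cast Set.ncard_le_ncard hPf (finite_latticePointsOnGraph f N)

/-- Jarník's construction: for all large `N` there is a strictly convex
`f : [0,N] → [0,N]` with `≫ N^{2/3}` integer points on its graph. -/
theorem stmt_14 :
    ∃ c : ℝ, 0 < c ∧ ∃ N₀ : ℝ, ∀ N : ℝ, N₀ ≤ N →
      ∃ f : ℝ → ℝ, StrictConvexOn ℝ (Icc 0 N) f ∧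
        (∀ x ∈ Icc (0 : ℝ) N, f x ∈ Icc (0 : ℝ) N) ∧
        c * N ^ ((2 : ℝ) / 3) ≤
          ({p : ℤ × ℤ | (p.1 : ℝ) ∈ Icc (0 : ℝ) N ∧ f p.1 = (p.2 : ℝ)}.ncard : ℝ) := by
  refine ⟨1 / 192, by norm_num, 64, fun N hN => ?_⟩
  have hN0 : 0 ≤ N := by linarith
  set u := N ^ ((1 : ℝ) / 3)
  have hu3 : u ^ 3 = N := by
    rw [← Real.rpow_natCast, ← Real.rpow_mul hN0]; norm_num
  have hu2 : N ^ ((2 : ℝ) / 3) = u ^ 2 := by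
    rw [← Real.rpow_natCast, ← Real.rpow_mul hN0]; norm_num
  have hu : 4 ≤ u := le_of_pow_le_pow_left₀ three_ne_zero (Real.rpow_nonneg hN0 _) (by linarith)
  set H := ⌊u / 2⌋₊
  have hHu : (H : ℝ) ≤ u / 2 := Nat.floor_le (by linarith)
  have hH : u / 4 ≤ H := by linarith [Nat.sub_one_lt_floor (u / 2)]
  obtain ⟨f, hf, hmaps, hcount⟩ := exists_strictConvexOn_many_latticePointsOnGraph H
    (N := N) (by nlinarith [pow_le_pow_left₀ (Nat.cast_nonneg H) hHu 3])
  refine ⟨f, hf, hmaps, le_trans ?_ hcount⟩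
  rw [hu2]
  nlinarith [pow_le_pow_left₀ (by linarith) hH 2]
end
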